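/- arXiv:2511.18420 — 12 statements merged into one kernel-verified Lean document; each statement's English description precedes it below -/
import Mathlib

section
/- Let q be a prime power, k ≥ 1, f : F_q^k → S any function, and t_d ≤ t_f natural numbers. Let u_1, …, u_{q^k} be an enumeration of all vectors of F_q^k. Then the optimal redundancy satisfies r_f(k, t_d, t_f) = N(D_f(t_d, t_f : u_1, …, u_{q^k})). -/
/-- The distance requirement matrix `D_f(t_d, t_f : u_1, …, u_M)`. -/
def DRM {F S : Type*} [Fintype F] [DecidableEq F] [DecidableEq S] {k M : ℕ}
    (f : (Fin k → F) → S) (td tf : ℕ) (u : Fin M → Fin k → F) :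
    Fin M → Fin M → ℕ := fun i j =>
  if u i ≠ u j ∧ f (u i) = f (u j) then 2 * td + 1 - hammingDist (u i) (u j)
  else if f (u i) ≠ f (u j) then 2 * tf + 1 - hammingDist (u i) (u j)
  else 0

/-- `N(D)`: the least length `r` for which a `D`-code of length `r` over `F` exists. -/
noncomputable def Nmat (F : Type*) [Fintype F] [DecidableEq F] {M : ℕ}
    (D : Fin M → Fin M → ℕ) : ℕ :=
  sInf {r : ℕ | ∃ p : Fin M → Fin r → F, ∀ i j, D i j ≤ hammingDist (p i) (p j)}

/-- An `(f : d_d, d_f)`-FCC: a systematic encoding with minimum distance `d_d` overall and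
`d_f` between codewords with distinct function values. -/
def IsFCC {F S : Type*} [Fintype F] [DecidableEq F] {k r : ℕ}
    (f : (Fin k → F) → S) (dd df : ℕ)
    (c : (Fin k → F) → (Fin (k + r) → F)) : Prop :=
  (∀ u i, c u (Fin.castAdd r i) = u i) ∧
  (∀ u v, u ≠ v → dd ≤ hammingDist (c u) (c v)) ∧
  (∀ u v, f u ≠ f v → df ≤ hammingDist (c u) (c v))

/-- The optimal redundancy `r_f(k : d_d, d_f)`. -/
noncomputable def optRedundancy {F S : Type*} [Fintype F] [DecidableEq F] {k : ℕ}
    (f : (Fin k → F) → S) (dd df : ℕ) : ℕ :=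
  sInf {r : ℕ | ∃ c : (Fin k → F) → (Fin (k + r) → F), IsFCC f dd df c}

/-!
A systematic encoding is `v ↦ (v, p v)` for a parity map `p`, and the Hamming distance of two
codewords is `d(v, w) + d(p v, p w)`. So `c` is an FCC exactly when `d(p v, p w)` makes up the
deficits `2t_d + 1 - d(v, w)` (for `v ≠ w`) and `2t_f + 1 - d(v, w)` (for `f v ≠ f w`), which
are the entries of `D_f`; since `t_d ≤ t_f`, the second requirement subsumes the first. Hence the
redundancies of FCCs are exactly the lengths of `D_f`-codes.
-/

theorem hammingDist_append {F : Type*} [DecidableEq F] {k r : ℕ}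
    (x₁ x₂ : Fin k → F) (y₁ y₂ : Fin r → F) :
    hammingDist (Fin.append x₁ y₁) (Fin.append x₂ y₂) = hammingDist x₁ x₂ + hammingDist y₁ y₂ := by
  simp only [hammingDist, Finset.card_filter, Fin.sum_univ_add, Fin.append_left, Fin.append_right]

section

variable {F S : Type*} [DecidableEq F] {k r : ℕ}

def IsFCCParity (f : (Fin k → F) → S) (dd df : ℕ) (p : (Fin k → F) → Fin r → F) : Prop :=
  (∀ v w, v ≠ w → dd ≤ hammingDist v w + hammingDist (p v) (p w)) ∧
  (∀ v w, f v ≠ f w → df ≤ hammingDist v w + hammingDist (p v) (p w))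

variable [Fintype F]

theorem isFCC_append_iff (f : (Fin k → F) → S) (dd df : ℕ) (p : (Fin k → F) → Fin r → F) :
    IsFCC f dd df (fun v => Fin.append v (p v)) ↔ IsFCCParity f dd df p := by
  simp only [IsFCC, IsFCCParity, hammingDist_append, Fin.append_left, implies_true, true_and]

theorem exists_isFCC_iff (f : (Fin k → F) → S) (dd df : ℕ) :
    (∃ c : (Fin k → F) → Fin (k + r) → F, IsFCC f dd df c) ↔
      ∃ p : (Fin k → F) → Fin r → F, IsFCCParity f dd df p := by
  constructor
  · rintro ⟨c, hc⟩
    have hc_eq : c = fun v => Fin.append v (c v ∘ Fin.natAdd k) := by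
      funext v
      conv_lhs => rw [← Fin.append_castAdd_natAdd (f := c v)]
      congr 1
      exact funext (hc.1 v)
    rw [hc_eq, isFCC_append_iff] at hc
    exact ⟨_, hc⟩
  · rintro ⟨p, hp⟩
    exact ⟨_, (isFCC_append_iff f dd df p).2 hp⟩

variable [DecidableEq S] {M : ℕ}

theorem DRM_le_iff (f : (Fin k → F) → S) {td tf : ℕ} (htdtf : td ≤ tf) (u : Fin M → Fin k → F)
    (i j : Fin M) (b : ℕ) :
    DRM f td tf u i j ≤ b ↔
      (u i ≠ u j → 2 * td + 1 ≤ hammingDist (u i) (u j) + b) ∧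
      (f (u i) ≠ f (u j) → 2 * tf + 1 ≤ hammingDist (u i) (u j) + b) := by
  unfold DRM
  split_ifs with hsame hdiff
  · exact ⟨fun h => ⟨fun _ => by omega, fun h' => absurd hsame.2 h'⟩,
      fun h => by have := h.1 hsame.1; omega⟩
  · exact ⟨fun h => ⟨fun _ => by omega, fun _ => by omega⟩, fun h => by have := h.2 hdiff; omega⟩
  · exact ⟨fun _ => ⟨fun hne => absurd ⟨hne, not_not.1 hdiff⟩ hsame, fun h' => absurd h' hdiff⟩,
      fun _ => Nat.zero_le _⟩

theorem exists_DRM_code_iff (f : (Fin k → F) → S) {td tf : ℕ} (htdtf : td ≤ tf)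
    {u : Fin M → Fin k → F} (hu : Function.Surjective u) :
    (∃ p : Fin M → Fin r → F, ∀ i j, DRM f td tf u i j ≤ hammingDist (p i) (p j)) ↔
      ∃ p : (Fin k → F) → Fin r → F, IsFCCParity f (2 * td + 1) (2 * tf + 1) p := by
  simp only [DRM_le_iff f htdtf]
  constructor
  · rintro ⟨p, hp⟩
    refine ⟨p ∘ Function.surjInv hu, fun v w hvw => ?_, fun v w hvw => ?_⟩ <;>
      obtain ⟨hdd, hdf⟩ := hp (Function.surjInv hu v) (Function.surjInv hu w) <;>
      simp only [Function.surjInv_eq] at hdd hdf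
    exacts [hdd hvw, hdf hvw]
  · rintro ⟨p, hdd, hdf⟩
    exact ⟨p ∘ u, fun i j => ⟨hdd (u i) (u j), hdf (u i) (u j)⟩⟩

end

theorem optRedundancy_eq_Nmat_DRM_general
    {F S : Type*} [Fintype F] [DecidableEq F] [DecidableEq S]
    {k : ℕ} (f : (Fin k → F) → S) (td tf : ℕ) (htdtf : td ≤ tf)
    (u : Fin (Fintype.card F ^ k) → (Fin k → F)) (hu : Function.Bijective u) :
    optRedundancy f (2 * td + 1) (2 * tf + 1) = Nmat F (DRM f td tf u) := by
  unfold optRedundancy Nmat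
  congr 1
  ext r
  exact (exists_isFCC_iff f _ _).trans (exists_DRM_code_iff f htdtf hu.surjective).symm

/-- For any function `f : F_q^k → S` and `t_d ≤ t_f`, if `u` enumerates all
vectors of `F_q^k`, then `r_f(k, t_d, t_f) = N(D_f(t_d, t_f : u_1, …, u_{q^k}))`. -/
theorem optRedundancy_eq_Nmat_DRM
    {F S : Type*} [Field F] [Fintype F] [DecidableEq F] [DecidableEq S]
    {k : ℕ} (hk : 1 ≤ k) (f : (Fin k → F) → S) (td tf : ℕ) (htdtf : td ≤ tf)
    (u : Fin (Fintype.card F ^ k) → (Fin k → F)) (hu : Function.Bijective u) :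
    optRedundancy f (2 * td + 1) (2 * tf + 1) = Nmat F (DRM f td tf u) :=
  optRedundancy_eq_Nmat_DRM_general f td tf htdtf u hu
end

section
/- Let q be a prime power, f : F_q^k → S any function, and t_d ≤ t_f natural numbers. Then: (i) for any vectors u_1, …, u_m ∈ F_q^k, r_f(k, t_d, t_f) ≥ N(D_f(t_d, t_f : u_1, …, u_m)); (ii) if |Im(f)| ≥ 2, then r_f(k, t_d, t_f) ≥ 2t_f; and (iii) r_f(k, t_d, t_f) ≥ N(q^k, 2t_d+1) − k, where N(M, d) denotes the minimum length of a q-ary code with M codewords and pairwise Hamming distance at least d. -/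
/-- `N(M, d)`: the minimum length of a code over `F` with `M` codewords and pairwise
Hamming distance at least `d`. -/
noncomputable def Ncode (F : Type*) [Fintype F] [DecidableEq F] (M d : ℕ) : ℕ :=
  sInf {n : ℕ | ∃ p : Fin M → Fin n → F, ∀ i j, i ≠ j → d ≤ hammingDist (p i) (p j)}

/-!
A systematic encoding has the shape `u ↦ (u, p u)`, so `d(c u, c v) = d(u, v) + d(p u, p v)`.
Hence the redundancy parts `p u_i` form a `D_f`-code of length `r`, which gives (i); the
codewords themselves form a code with `q^k` words of length `k + r` and minimum distance
`2 t_d + 1`, which gives (iii). For (ii), walking from one message to another coordinate by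
coordinate shows that a nonconstant `f` separates two messages at distance `1`; their codewords
differ in at most `1 + r` positions but must differ in `2 t_f + 1`. The bounds pass to the
infimum `r_f` because FCCs exist at all: repeating the message often enough gives one.
-/

open Function Finset

lemma hammingDist_append_s1 {β : Type*} [DecidableEq β] {m n : ℕ} (x x' : Fin m → β)
    (y y' : Fin n → β) :
    hammingDist (Fin.append x y) (Fin.append x' y') = hammingDist x x' + hammingDist y y' := by
  simp only [hammingDist, card_filter, Fin.sum_univ_add, Fin.append_left, Fin.append_right]

lemma hammingDist_update_le {ι β : Type*} [Fintype ι] [DecidableEq ι] [DecidableEq β]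
    (x : ι → β) (i : ι) (b : β) : hammingDist (update x i b) x ≤ 1 := by
  refine (card_le_card fun j hj => ?_).trans (card_singleton i).le
  by_contra hji
  simp_all [update_of_ne (mem_singleton.not.mp hji)]

lemma card_le_hammingDist_of_injective {ι κ β : Type*} [Fintype ι] [Fintype κ] [DecidableEq β]
    {x y : ι → β} (φ : κ → ι) (hφ : Injective φ) (h : ∀ b, x (φ b) ≠ y (φ b)) :
    Fintype.card κ ≤ hammingDist x y :=
  card_le_card_of_injOn φ (fun b _ => by simpa using h b) hφ.injOn

lemma eq_of_forall_update_eq {ι β S : Type*} [Fintype ι] [DecidableEq ι] (g : (ι → β) → S)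
    (hg : ∀ x i b, g (update x i b) = g x) (u v : ι → β) : g u = g v := by
  let w : Finset ι → ι → β := fun s i => if i ∈ s then v i else u i
  have hw : ∀ s, g (w s) = g u := by
    intro s
    induction s using Finset.induction_on with
    | empty => simp [w]
    | insert a s ha ih =>
      have : w (insert a s) = update (w s) a (v a) := by
        ext i
        rcases eq_or_ne i a with rfl | hia <;> simp_all [w]
      rw [this, hg, ih]
  simpa [w] using (hw univ).symm

lemma succ_le_hammingDist_repeat {β : Type*} [DecidableEq β] {n k : ℕ} {u v : Fin k → β}
    (huv : u ≠ v) :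
    n + 1 ≤ hammingDist (Fin.append u fun j : Fin (n * k) => u (finProdFinEquiv.symm j).2)
      (Fin.append v fun j : Fin (n * k) => v (finProdFinEquiv.symm j).2) := by
  obtain ⟨i, hi⟩ := Function.ne_iff.mp huv
  rw [hammingDist_append_s1, add_comm]
  gcongr
  · exact hammingDist_pos.mpr huv
  · simpa using card_le_hammingDist_of_injective (fun b : Fin n => finProdFinEquiv (b, i))
      (finProdFinEquiv.injective.comp (Prod.mk_left_injective i))
      (x := fun j => u (finProdFinEquiv.symm j).2) (y := fun j => v (finProdFinEquiv.symm j).2)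
      fun b => by simpa only [Equiv.symm_apply_apply] using hi

section FCC

variable {F S : Type*} [Fintype F] [DecidableEq F] {k r : ℕ} {f : (Fin k → F) → S}
  {dd df : ℕ} {c : (Fin k → F) → Fin (k + r) → F}

lemma exists_isFCC (f : (Fin k → F) → S) (dd df : ℕ) :
    ∃ r, ∃ c : (Fin k → F) → Fin (k + r) → F, IsFCC f dd df c := by
  refine ⟨max dd df * k, fun u => Fin.append u fun j => u (finProdFinEquiv.symm j).2,
    fun u i => Fin.append_left _ _ i, fun u v huv => ?_, fun u v huv => ?_⟩
  all_goals
    refine le_trans ?_ (succ_le_hammingDist_repeat (by rintro rfl; exact huv rfl))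
    omega

lemma le_optRedundancy {b : ℕ}
    (h : ∀ r (c : (Fin k → F) → Fin (k + r) → F), IsFCC f dd df c → b ≤ r) :
    b ≤ optRedundancy f dd df := by
  obtain ⟨r, c, hc⟩ := exists_isFCC f dd df
  exact le_csInf ⟨r, c, hc⟩ fun r ⟨c, hc⟩ => h r c hc

namespace IsFCC

lemma eq_append (hc : IsFCC f dd df c) (u : Fin k → F) :
    c u = Fin.append u fun j => c u (Fin.natAdd k j) := by
  ext i
  refine Fin.addCases (fun i => ?_) (fun j => ?_) i <;> simp [hc.1]

lemma hammingDist_eq (hc : IsFCC f dd df c) (u v : Fin k → F) :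
    hammingDist (c u) (c v) = hammingDist u v +
      hammingDist (fun j => c u (Fin.natAdd k j)) (fun j => c v (Fin.natAdd k j)) := by
  rw [← hammingDist_append_s1, ← hc.eq_append, ← hc.eq_append]

lemma nmat_drm_le [DecidableEq S] {td tf : ℕ} (hc : IsFCC f (2 * td + 1) (2 * tf + 1) c)
    {m : ℕ} (u : Fin m → Fin k → F) : Nmat F (DRM f td tf u) ≤ r := by
  refine Nat.sInf_le ⟨fun i j => c (u i) (Fin.natAdd k j), fun i j => ?_⟩
  dsimp only
  have hsplit := hc.hammingDist_eq (u i) (u j)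
  unfold DRM
  split_ifs with hdiff hval
  · have := hc.2.1 _ _ hdiff.1; omega
  · have := hc.2.2 _ _ hval; omega
  · exact Nat.zero_le _

lemma le_add_one_of_nontrivial (hc : IsFCC f dd df c) (hf : (Set.range f).Nontrivial) :
    df ≤ r + 1 := by
  by_contra! hr
  obtain ⟨_, ⟨u, rfl⟩, _, ⟨v, rfl⟩, huv⟩ := hf
  refine huv (eq_of_forall_update_eq f (fun x i b => ?_) u v)
  by_contra hx
  have hsep := hc.2.2 _ _ hx
  have hsplit := hc.hammingDist_eq (update x i b) x
  have hmsg := hammingDist_update_le x i b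
  have hred : hammingDist (fun j => c (update x i b) (Fin.natAdd k j))
      (fun j => c x (Fin.natAdd k j)) ≤ r :=
    hammingDist_le_card_fintype.trans (Fintype.card_fin r).le
  omega

lemma ncode_le (hc : IsFCC f dd df c) : Ncode F (Fintype.card F ^ k) dd ≤ k + r := by
  let e := Fintype.equivFinOfCardEq (by simp : Fintype.card (Fin k → F) = Fintype.card F ^ k)
  exact Nat.sInf_le ⟨fun i => c (e.symm i), fun i j hij => hc.2.1 _ _ (e.symm.injective.ne hij)⟩

end IsFCC

end FCC

theorem optRedundancy_lower_bounds_general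
    {F S : Type*} [Fintype F] [DecidableEq F] [DecidableEq S]
    {k : ℕ} (f : (Fin k → F) → S) (td tf : ℕ) :
    (∀ (m : ℕ) (u : Fin m → Fin k → F),
        Nmat F (DRM f td tf u) ≤ optRedundancy f (2 * td + 1) (2 * tf + 1)) ∧
    ((Set.range f).Nontrivial →
        2 * tf ≤ optRedundancy f (2 * td + 1) (2 * tf + 1)) ∧
    (Ncode F (Fintype.card F ^ k) (2 * td + 1) - k ≤
        optRedundancy f (2 * td + 1) (2 * tf + 1)) := by
  refine ⟨fun m u => le_optRedundancy fun r c hc => hc.nmat_drm_le u,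
    fun hf => le_optRedundancy fun r c hc => ?_, le_optRedundancy fun r c hc => ?_⟩
  · have := hc.le_add_one_of_nontrivial hf
    omega
  · have := hc.ncode_le
    omega

/-- (i) `r_f(k, t_d, t_f) ≥ N(D_f(t_d, t_f : u_1, …, u_m))` for any vectors;
(ii) if `|Im(f)| ≥ 2` then `r_f(k, t_d, t_f) ≥ 2 t_f`;
(iii) `r_f(k, t_d, t_f) ≥ N(q^k, 2 t_d + 1) − k`. -/
theorem optRedundancy_lower_bounds
    {F S : Type*} [Field F] [Fintype F] [DecidableEq F] [DecidableEq S]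
    {k : ℕ} (f : (Fin k → F) → S) (td tf : ℕ) (htdtf : td ≤ tf) :
    (∀ (m : ℕ) (u : Fin m → Fin k → F),
        Nmat F (DRM f td tf u) ≤ optRedundancy f (2 * td + 1) (2 * tf + 1)) ∧
    ((Set.range f).Nontrivial →
        2 * tf ≤ optRedundancy f (2 * td + 1) (2 * tf + 1)) ∧
    (Ncode F (Fintype.card F ^ k) (2 * td + 1) - k ≤
        optRedundancy f (2 * td + 1) (2 * tf + 1)) :=
  optRedundancy_lower_bounds_general f td tf
end

section
/- Let q be a prime power, f : F_q^k → S any function, and t_d ≤ t_f. Let C be an [n, k] linear code over F_q with minimum distance at least 2t_d+1 and encoding u ↦ c_u. Then for any vectors u_1, …, u_M ∈ F_q^k, N(D_{C,f}(t_f : u_1, …, u_M)) ≤ N(M, 2(t_f − t_d)), where N(M, D) is the minimum length of a q-ary code with M codewords and pairwise Hamming distance at least D. -/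
/-!
Diagonal entries of `D_{C,f}` vanish, and an off-diagonal entry is nonzero only when
`u_i ≠ u_j`, where the minimum distance gives `d(c_{u_i}, c_{u_j}) ≥ 2t_d+1` and hence the entry
is at most `2(t_f − t_d)`. So every code with `M` codewords at pairwise distance
`≥ 2(t_f − t_d)` is already a `D_{C,f}`-code; such codes exist (e.g. block indicator vectors),
so `N(M, 2(t_f − t_d))` is attained.
-/

/-- The coded distance requirement matrix `D_{C,f}(t_f : u_1, …, u_M)`. -/
def CDRM {F S : Type*} [Fintype F] [DecidableEq F] [DecidableEq S] {k n M : ℕ}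
    (cenc : (Fin k → F) → (Fin n → F)) (f : (Fin k → F) → S) (tf : ℕ)
    (u : Fin M → Fin k → F) : Fin M → Fin M → ℕ := fun i j =>
  if f (u i) ≠ f (u j) then 2 * tf + 1 - hammingDist (cenc (u i)) (cenc (u j)) else 0

open Finset

/-- Codeword `i` is `a` on the `i`-th of `M` blocks of length `d` and `b` elsewhere. -/
theorem exists_code_length_mul (F : Type*) [DecidableEq F] [Nontrivial F] (M d : ℕ) :
    ∃ p : Fin M → Fin (d * M) → F, ∀ i j, i ≠ j → d ≤ hammingDist (p i) (p j) := by
  obtain ⟨a, b, hab⟩ := exists_pair_ne F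
  refine ⟨fun i x => if (finProdFinEquiv.symm x).2 = i then a else b, fun i j hij => ?_⟩
  have hblock : (fun t : Fin d => finProdFinEquiv (t, i)).Injective := fun s t h => by simpa using h
  calc d = #(univ.image fun t : Fin d => finProdFinEquiv (t, i)) := by
        rw [card_image_of_injective _ hblock, card_univ, Fintype.card_fin]
    _ ≤ hammingDist _ _ := card_le_card fun x hx => by
      obtain ⟨t, -, rfl⟩ := mem_image.mp hx
      simp only [mem_filter, mem_univ, true_and, Equiv.symm_apply_apply]
      simp [hab, hij]

theorem Ncode_mem (F : Type*) [Fintype F] [DecidableEq F] [Nontrivial F] (M d : ℕ) :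
    ∃ p : Fin M → Fin (Ncode F M d) → F, ∀ i j, i ≠ j → d ≤ hammingDist (p i) (p j) :=
  Nat.sInf_mem (s := {n | ∃ p : Fin M → Fin n → F, ∀ i j, i ≠ j → d ≤ hammingDist (p i) (p j)})
    ⟨d * M, exists_code_length_mul F M d⟩

theorem Nmat_le_Ncode_of_le (F : Type*) [Fintype F] [DecidableEq F] [Nontrivial F] {M d : ℕ}
    {D : Fin M → Fin M → ℕ} (hdiag : ∀ i, D i i = 0) (hle : ∀ i j, i ≠ j → D i j ≤ d) :
    Nmat F D ≤ Ncode F M d := by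
  obtain ⟨p, hp⟩ := Ncode_mem F M d
  refine Nat.sInf_le ⟨p, fun i j => ?_⟩
  rcases eq_or_ne i j with rfl | hij
  · simp [hdiag]
  · exact (hle i j hij).trans (hp i j hij)

section CDRM

variable {F S : Type*} [Fintype F] [DecidableEq F] [DecidableEq S] {k n M : ℕ}
  (cenc : (Fin k → F) → (Fin n → F)) (f : (Fin k → F) → S) (tf : ℕ) (u : Fin M → Fin k → F)

theorem CDRM_self (i : Fin M) : CDRM cenc f tf u i i = 0 := by
  simp [CDRM]

theorem CDRM_le {td : ℕ}
    (hdist : ∀ v w : Fin k → F, v ≠ w → 2 * td + 1 ≤ hammingDist (cenc v) (cenc w))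
    (i j : Fin M) : CDRM cenc f tf u i j ≤ 2 * (tf - td) := by
  unfold CDRM
  split_ifs with hf
  · have := hdist (u i) (u j) fun h => hf (congrArg f h)
    omega
  · exact Nat.zero_le _

end CDRM

theorem Nmat_CDRM_le_Ncode_general
    {F S : Type*} [Field F] [Fintype F] [DecidableEq F] [DecidableEq S]
    {k n : ℕ} (f : (Fin k → F) → S) (td tf : ℕ)
    (C : (Fin k → F) →ₗ[F] (Fin n → F))
    (hCdist : ∀ u v : Fin k → F, u ≠ v → 2 * td + 1 ≤ hammingDist (C u) (C v))
    {M : ℕ} (u : Fin M → Fin k → F) :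
    Nmat F (CDRM (⇑C) f tf u) ≤ Ncode F M (2 * (tf - td)) :=
  Nmat_le_Ncode_of_le F (CDRM_self C f tf u) fun i j _ => CDRM_le C f tf u hCdist i j

/-- For an `[n, k]` linear code `C` over `F_q` with minimum distance at least
`2t_d+1`, and any vectors `u_1, …, u_M ∈ F_q^k`,
`N(D_{C,f}(t_f : u_1, …, u_M)) ≤ N(M, 2(t_f − t_d))`. -/
theorem Nmat_CDRM_le_Ncode
    {F S : Type*} [Field F] [Fintype F] [DecidableEq F] [DecidableEq S]
    {k n : ℕ} (f : (Fin k → F) → S) (td tf : ℕ) (htdtf : td ≤ tf)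
    (C : (Fin k → F) →ₗ[F] (Fin n → F)) (hCinj : Function.Injective C)
    (hCdist : ∀ u v : Fin k → F, u ≠ v → 2 * td + 1 ≤ hammingDist (C u) (C v))
    {M : ℕ} (u : Fin M → Fin k → F) :
    Nmat F (CDRM (⇑C) f tf u) ≤ Ncode F M (2 * (tf - td)) :=
  Nmat_CDRM_le_Ncode_general f td tf C hCdist u
end

section
/- Let C ⊆ F_q^n be a code with |C| = q^k ≥ 2 and minimum distance d, and suppose the minimum-distance graph G(C) is connected. Then for every function f : F_q^k → S with |Im(f)| ≥ 2, every bijection u ↦ c_u from F_q^k onto C, and every d_f > d, there exist u, v ∈ F_q^k with f(u) ≠ f(v) and d(c_u, c_v) < d_f; that is, C cannot serve as an (f : d, d_f)-FCC with d_f > d. -/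
/-- The minimum distance of a code `C ⊆ F^n`: the least Hamming distance between distinct
codewords. -/
noncomputable def minDist {F : Type*} [Fintype F] [DecidableEq F] {n : ℕ}
    (C : Set (Fin n → F)) : ℕ :=
  sInf {d : ℕ | ∃ x ∈ C, ∃ y ∈ C, x ≠ y ∧ hammingDist x y = d}

/-- The minimum-distance graph `G(C)`: vertices are codewords, with distinct codewords adjacent
iff their Hamming distance equals the minimum distance of `C`. -/
noncomputable def mdGraph {F : Type*} [Fintype F] [DecidableEq F] {n : ℕ}
    (C : Set (Fin n → F)) : SimpleGraph C where
  Adj x y := x ≠ y ∧ hammingDist (x : Fin n → F) (y : Fin n → F) = minDist C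
  symm := by
    constructor
    rintro x y ⟨hxy, hd⟩
    exact ⟨hxy.symm, by rwa [hammingDist_comm]⟩
  loopless := by
    constructor
    rintro x ⟨hxx, -⟩
    exact hxx rfl

/-!
A labelling function that separates two codewords must separate some pair of codewords that are
either equal (when the encoding is not injective) or adjacent in `G(C)`, since a walk between the
first two codewords has to cross the boundary of a level set of the function somewhere. Both kinds
of pairs are at distance at most `d`, hence below `d_f`.
-/

namespace SimpleGraph

variable {V α S : Type*} {G : SimpleGraph V}

theorem Preconnected.exists_adj_ne (hG : G.Preconnected) {g : V → S} {x y : V}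
    (hxy : g x ≠ g y) : ∃ a b, G.Adj a b ∧ g a ≠ g b := by
  obtain ⟨⟨⟨a, b⟩, hab⟩, -, ha, hb⟩ :=
    (hG x y).some.exists_boundary_dart {v | g v = g x} rfl (Ne.symm hxy)
  exact ⟨a, b, hab, fun h => hb (h.symm.trans ha)⟩

theorem Preconnected.exists_ne_and_eq_or_adj (hG : G.Preconnected) {e : α → V}
    (he : Function.Surjective e) {f : α → S} {u v : α} (huv : f u ≠ f v) :
    ∃ a b, f a ≠ f b ∧ (e a = e b ∨ G.Adj (e a) (e b)) := by
  by_contra! h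
  -- Without a separated pair of equal codewords, `f` descends to the vertices along `e`.
  have hdesc : ∀ a, f (Function.surjInv he (e a)) = f a := fun a => by
    by_contra hne
    exact (h _ a hne).1 (Function.surjInv_eq he (e a))
  obtain ⟨p, q, hpq, hne⟩ := hG.exists_adj_ne (g := f ∘ Function.surjInv he)
    (x := e u) (y := e v) (by simpa only [Function.comp_apply, hdesc] using huv)
  refine (h _ _ hne).2 ?_
  rwa [Function.surjInv_eq he, Function.surjInv_eq he]

end SimpleGraph

theorem mdGraph_connected_no_strict_FCC_general
    {F S : Type*} [Fintype F] [DecidableEq F]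
    {n k d : ℕ} (C : Set (Fin n → F))
    (hmin : minDist C = d) (hconn : (mdGraph C).Connected)
    (f : (Fin k → F) → S) (hf : (Set.range f).Nontrivial)
    (cenc : (Fin k → F) → (Fin n → F))
    (hsurj : Set.range cenc = C)
    (df : ℕ) (hdf : d < df) :
    ∃ u v : Fin k → F, f u ≠ f v ∧ hammingDist (cenc u) (cenc v) < df := by
  obtain ⟨-, ⟨u, rfl⟩, -, ⟨v, rfl⟩, huv⟩ := hf
  let e : (Fin k → F) → C := fun w => ⟨cenc w, hsurj ▸ Set.mem_range_self w⟩
  have he : Function.Surjective e := fun c => by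
    obtain ⟨w, hw⟩ : (c : Fin n → F) ∈ Set.range cenc := hsurj ▸ c.2
    exact ⟨w, Subtype.ext hw⟩
  obtain ⟨a, b, hab, heq | hadj⟩ := hconn.preconnected.exists_ne_and_eq_or_adj he huv
  · refine ⟨a, b, hab, ?_⟩
    rw [show cenc a = cenc b from congrArg Subtype.val heq, hammingDist_self]
    exact Nat.zero_lt_of_lt hdf
  · exact ⟨a, b, hab, hadj.2 ▸ hmin ▸ hdf⟩

/-- If the minimum-distance graph of a code `C` with `|C| = q^k ≥ 2` and
minimum distance `d` is connected, then `C` cannot serve as a strict `(f : d, d_f)`-FCC for any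
`f` with `|Im(f)| ≥ 2` and `d_f > d`. -/
theorem mdGraph_connected_no_strict_FCC
    {F S : Type*} [Field F] [Fintype F] [DecidableEq F]
    {n k d : ℕ} (C : Set (Fin n → F))
    (hcard : Nat.card C = Fintype.card F ^ k) (h2 : 2 ≤ Nat.card C)
    (hmin : minDist C = d) (hconn : (mdGraph C).Connected)
    (f : (Fin k → F) → S) (hf : (Set.range f).Nontrivial)
    (cenc : (Fin k → F) → (Fin n → F)) (hinj : Function.Injective cenc)
    (hsurj : Set.range cenc = C)
    (df : ℕ) (hdf : d < df) :
    ∃ u v : Fin k → F, f u ≠ f v ∧ hammingDist (cenc u) (cenc v) < df :=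
  mdGraph_connected_no_strict_FCC_general C hmin hconn f hf cenc hsurj df hdf
end

section
/- Let C ⊆ F_q^n be a code with |C| = q^k ≥ 2 and minimum distance d, and suppose the minimum-distance graph G(C) has exactly Q connected components. Then for every function f : F_q^k → S with |Im(f)| ≥ Q + 1, every bijection u ↦ c_u from F_q^k onto C, and every d_f > d, there exist u, v ∈ F_q^k with f(u) ≠ f(v) and d(c_u, c_v) < d_f; that is, C cannot serve as an (f : d, d_f)-FCC with d_f > d. -/
namespace SimpleGraph

variable {V S : Type*} {G : SimpleGraph V} {g : V → S}

theorem Reachable.apply_eq_of_forall_adj (hg : ∀ ⦃v w⦄, G.Adj v w → g v = g w) {v w : V}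
    (h : G.Reachable v w) : g v = g w := by
  rw [reachable_iff_reflTransGen] at h
  induction h with
  | refl => rfl
  | tail _ hadj ih => exact ih.trans (hg hadj)

theorem natCard_range_le_natCard_connectedComponent [Finite G.ConnectedComponent]
    (hg : ∀ ⦃v w⦄, G.Adj v w → g v = g w) :
    Nat.card (Set.range g) ≤ Nat.card G.ConnectedComponent := by
  let g' : G.ConnectedComponent → S :=
    ConnectedComponent.lift g fun _ _ p _ => p.reachable.apply_eq_of_forall_adj hg
  have hg' : g' ∘ G.connectedComponentMk = g := rfl
  have hmk : Function.Surjective G.connectedComponentMk := Quot.mk_surjective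
  rw [← hg', hmk.range_comp]
  exact Finite.card_range_le g'

end SimpleGraph

theorem mdGraph_adj_imp_apply_eq {F M S : Type*} [Fintype F] [DecidableEq F] {n : ℕ}
    {C : Set (Fin n → F)} (e : M ≃ C) (f : M → S) {df : ℕ} (hdf : minDist C < df)
    (hsep : ∀ u v, f u ≠ f v → df ≤ hammingDist (e u : Fin n → F) (e v)) ⦃x y : C⦄
    (hxy : (mdGraph C).Adj x y) : f (e.symm x) = f (e.symm y) := by
  by_contra hne
  have := hsep _ _ hne
  simp only [Equiv.apply_symm_apply, hxy.2] at this
  omega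

theorem natCard_range_le_natCard_mdGraph_connectedComponent {F M S : Type*} [Fintype F]
    [DecidableEq F] {n : ℕ} {C : Set (Fin n → F)} (e : M ≃ C) (f : M → S) {df : ℕ}
    (hdf : minDist C < df)
    (hsep : ∀ u v, f u ≠ f v → df ≤ hammingDist (e u : Fin n → F) (e v)) :
    Nat.card (Set.range f) ≤ Nat.card (mdGraph C).ConnectedComponent := by
  have h := SimpleGraph.natCard_range_le_natCard_connectedComponent (g := f ∘ e.symm)
    (mdGraph_adj_imp_apply_eq e f hdf hsep)
  rwa [EquivLike.range_comp f e.symm] at h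

theorem mdGraph_components_no_strict_FCC_general
    {F S : Type*} [Fintype F] [DecidableEq F]
    {n k d Q : ℕ} (C : Set (Fin n → F))
    (hmin : minDist C = d)
    (hQ : Nat.card (mdGraph C).ConnectedComponent = Q)
    (f : (Fin k → F) → S) (hf : Q + 1 ≤ Nat.card (Set.range f))
    (cenc : (Fin k → F) → (Fin n → F)) (hinj : Function.Injective cenc)
    (hsurj : Set.range cenc = C)
    (df : ℕ) (hdf : d < df) :
    ∃ u v : Fin k → F, f u ≠ f v ∧ hammingDist (cenc u) (cenc v) < df := by
  by_contra! hsep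
  let e : (Fin k → F) ≃ C := (Equiv.ofInjective cenc hinj).trans (Equiv.setCongr hsurj)
  have := natCard_range_le_natCard_mdGraph_connectedComponent e f (hmin ▸ hdf) hsep
  omega

/-- If the minimum-distance graph of a code `C` with `|C| = q^k ≥ 2` and
minimum distance `d` has exactly `Q` connected components, then `C` cannot serve as a strict
`(f : d, d_f)`-FCC for any `f` with `|Im(f)| ≥ Q + 1` and `d_f > d`. -/
theorem mdGraph_components_no_strict_FCC
    {F S : Type*} [Field F] [Fintype F] [DecidableEq F]
    {n k d Q : ℕ} (C : Set (Fin n → F))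
    (hcard : Nat.card C = Fintype.card F ^ k) (h2 : 2 ≤ Nat.card C)
    (hmin : minDist C = d)
    (hQ : Nat.card (mdGraph C).ConnectedComponent = Q)
    (f : (Fin k → F) → S) (hf : Q + 1 ≤ Nat.card (Set.range f))
    (cenc : (Fin k → F) → (Fin n → F)) (hinj : Function.Injective cenc)
    (hsurj : Set.range cenc = C)
    (df : ℕ) (hdf : d < df) :
    ∃ u v : Fin k → F, f u ≠ f v ∧ hammingDist (cenc u) (cenc v) < df :=
  mdGraph_components_no_strict_FCC_general C hmin hQ f hf cenc hinj hsurj df hdf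
end

section
/- Let C ⊆ F_q^n be a perfect t-error-correcting code with at least two codewords, i.e., a code of minimum distance 2t+1 satisfying |C| · Σ_{i=0}^{t} binom(n,i)(q−1)^i = q^n. Then the minimum-distance graph G(C) is connected: any two codewords of C are joined by a path of codewords in which consecutive codewords are at Hamming distance exactly 2t+1. -/
open Finset

section HammingCount

variable {ι F : Type*} [Fintype ι] [DecidableEq ι] [Fintype F] [DecidableEq F]

lemma card_filter_ne_coords_eq (x : ι → F) (s : Finset ι) :
    #{y : ι → F | ({j | x j ≠ y j} : Finset ι) = s} = (Fintype.card F - 1) ^ #s := by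
  have hfiber : ({y | ({j | x j ≠ y j} : Finset ι) = s} : Finset (ι → F)) =
      Fintype.piFinset fun j => if j ∈ s then univ.erase (x j) else {x j} := by
    ext y
    simp only [mem_filter, mem_univ, true_and, Finset.ext_iff, Fintype.mem_piFinset]
    refine forall_congr' fun j => ?_
    split_ifs with hj <;> simp [hj, eq_comm]
  rw [hfiber, Fintype.card_piFinset]
  simp [apply_ite card]

lemma card_filter_hammingDist_eq (x : ι → F) (i : ℕ) :
    #{y : ι → F | hammingDist x y = i} =
      (Fintype.card ι).choose i * (Fintype.card F - 1) ^ i := by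
  rw [card_eq_sum_card_fiberwise (f := fun y : ι → F => ({j | x j ≠ y j} : Finset ι))
    (t := powersetCard i univ) fun y hy => by simpa [mem_powersetCard, hammingDist] using hy]
  rw [sum_congr rfl fun s hs => ?_, sum_const, card_powersetCard, card_univ, smul_eq_mul]
  rw [mem_powersetCard] at hs
  rw [filter_filter, ← hs.2, ← card_filter_ne_coords_eq x s]
  congr 1
  refine filter_congr fun y _ => ⟨And.right, fun h => ⟨?_, h⟩⟩
  rw [hammingDist, h]

lemma card_filter_hammingDist_le (x : ι → F) (t : ℕ) :
    #{y : ι → F | hammingDist x y ≤ t} =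
      ∑ i ∈ range (t + 1), (Fintype.card ι).choose i * (Fintype.card F - 1) ^ i := by
  rw [card_eq_sum_card_fiberwise (f := hammingDist x) (t := range (t + 1))
    fun y hy => by simpa [Nat.lt_succ_iff] using hy]
  refine sum_congr rfl fun i hi => ?_
  rw [filter_filter, ← card_filter_hammingDist_eq x i]
  congr 1
  refine filter_congr fun y _ => ⟨And.right, fun h => ⟨?_, h⟩⟩
  rw [h]
  exact Nat.lt_succ_iff.mp (mem_range.mp hi)

lemma exists_hammingDist_le_of_perfect (C : Set (ι → F)) {t : ℕ}
    (hsep : ∀ x ∈ C, ∀ y ∈ C, x ≠ y → 2 * t < hammingDist x y)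
    (hperfect : Nat.card C *
        (∑ i ∈ range (t + 1), (Fintype.card ι).choose i * (Fintype.card F - 1) ^ i) =
      Fintype.card F ^ Fintype.card ι)
    (w : ι → F) : ∃ c ∈ C, hammingDist w c ≤ t := by
  classical
  set ball : (ι → F) → Finset (ι → F) := fun c => {y | hammingDist c y ≤ t}
  have hdisj : (C.toFinset : Set (ι → F)).PairwiseDisjoint ball := by
    intro c hc c' hc' hne
    refine disjoint_left.mpr fun y hy hy' => ?_
    simp only [ball, mem_filter, mem_univ, true_and] at hy hy'
    have := hsep c (by simpa using hc) c' (by simpa using hc') hne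
    have := hammingDist_triangle c y c'
    rw [hammingDist_comm y c'] at this
    omega
  have hcover : C.toFinset.biUnion ball = univ := by
    refine eq_univ_of_card _ ?_
    rw [card_biUnion hdisj, sum_congr rfl fun c _ => card_filter_hammingDist_le c t, sum_const,
      smul_eq_mul, ← Nat.card_eq_card_toFinset, hperfect, Fintype.card_fun]
  obtain ⟨c, hc, hwc⟩ := mem_biUnion.mp (hcover ▸ mem_univ w)
  refine ⟨c, by simpa using hc, ?_⟩
  rw [hammingDist_comm]
  simpa [ball] using hwc

end HammingCount

section Hamming

variable {ι F : Type*} [Fintype ι] [DecidableEq ι] [DecidableEq F]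

lemma exists_hammingDist_eq_of_le (x y : ι → F) {k : ℕ} (hk : k ≤ hammingDist x y) :
    ∃ w, hammingDist x w = k ∧ hammingDist w y = hammingDist x y - k := by
  obtain ⟨S, hS, rfl⟩ := exists_subset_card_eq hk
  refine ⟨S.piecewise y x, congrArg card ?_, ?_⟩
  · ext j
    by_cases hj : j ∈ S
    · simpa [hj] using hS hj
    · simp [hj]
  · rw [hammingDist, hammingDist, ← card_sdiff_of_subset hS]
    congr 1
    ext j
    by_cases hj : j ∈ S <;> simp [hj]

lemma exists_hammingDist_eq_and_lt_of_covering (C : Set (ι → F)) {t : ℕ}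
    (hsep : ∀ x ∈ C, ∀ y ∈ C, x ≠ y → 2 * t < hammingDist x y)
    (hcov : ∀ w, ∃ c ∈ C, hammingDist w c ≤ t) {x y : ι → F} (hx : x ∈ C) (hy : y ∈ C)
    (hxy : x ≠ y) : ∃ c ∈ C, hammingDist x c = 2 * t + 1 ∧ hammingDist c y < hammingDist x y := by
  have hxy' := hsep x hx y hy hxy
  obtain ⟨w, hxw, hwy⟩ := exists_hammingDist_eq_of_le x y (k := t + 1) (by omega)
  obtain ⟨c, hc, hwc⟩ := hcov w
  have hcx : x ≠ c := by
    rintro rfl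
    rw [hammingDist_comm] at hwc
    omega
  have hxc := hsep x hx c hc hcx
  have := hammingDist_triangle x w c
  have := hammingDist_triangle_left c y w
  exact ⟨c, hc, by omega, by omega⟩

end Hamming

lemma SimpleGraph.preconnected_of_exists_adj_lt {V : Type*} (G : SimpleGraph V) (f : V → V → ℕ)
    (h : ∀ x y, x ≠ y → ∃ z, G.Adj x z ∧ f z y < f x y) : G.Preconnected := by
  intro x y
  induction hd : f x y using Nat.strong_induction_on generalizing x with
  | _ d ih =>
    by_cases hxy : x = y
    · exact hxy ▸ SimpleGraph.Reachable.refl x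
    obtain ⟨z, hxz, hz⟩ := h x y hxy
    exact hxz.reachable.trans (ih _ (hd ▸ hz) z rfl)

section minDist

variable {F : Type*} [Fintype F] [DecidableEq F] {n : ℕ} {C : Set (Fin n → F)}

lemma minDist_le_hammingDist {x y : Fin n → F} (hx : x ∈ C) (hy : y ∈ C) (hxy : x ≠ y) :
    minDist C ≤ hammingDist x y :=
  Nat.sInf_le ⟨x, hx, y, hy, hxy, rfl⟩

lemma nonempty_of_minDist_ne_zero (h : minDist C ≠ 0) : C.Nonempty := by
  by_contra hC
  apply h
  rw [minDist, Set.not_nonempty_iff_eq_empty.mp hC]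
  simp

end minDist

theorem mdGraph_connected_of_perfect_general
    {F : Type*} [Fintype F] [DecidableEq F] {n t : ℕ}
    (C : Set (Fin n → F))
    (hmin : minDist C = 2 * t + 1)
    (hperfect : Nat.card C *
        (∑ i ∈ Finset.range (t + 1), n.choose i * (Fintype.card F - 1) ^ i) =
      Fintype.card F ^ n) :
    (mdGraph C).Connected := by
  have hsep : ∀ x ∈ C, ∀ y ∈ C, x ≠ y → 2 * t < hammingDist x y := fun x hx y hy hxy =>
    (hmin ▸ minDist_le_hammingDist hx hy hxy : 2 * t + 1 ≤ _)
  have hcov := exists_hammingDist_le_of_perfect C hsep (by simpa using hperfect)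
  obtain ⟨x₀, hx₀⟩ := nonempty_of_minDist_ne_zero (C := C) (by omega)
  have : Nonempty C := ⟨⟨x₀, hx₀⟩⟩
  refine ⟨(mdGraph C).preconnected_of_exists_adj_lt (fun x y => hammingDist x.1 y.1) ?_⟩
  rintro ⟨x, hx⟩ ⟨y, hy⟩ hxy
  obtain ⟨c, hc, hxc, hcy⟩ :=
    exists_hammingDist_eq_and_lt_of_covering C hsep hcov hx hy (by simpa using hxy)
  have hne : x ≠ c := hammingDist_ne_zero.mp (by omega)
  exact ⟨⟨c, hc⟩, ⟨fun h => hne (congrArg Subtype.val h), hxc.trans hmin.symm⟩, hcy⟩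

/-- The minimum-distance graph of a perfect `t`-error-correcting code (a code
of minimum distance `2t+1` meeting the Hamming bound with equality) is connected; in this graph
consecutive codewords on a path are at Hamming distance exactly `2t+1`. -/
theorem mdGraph_connected_of_perfect
    {F : Type*} [Fintype F] [DecidableEq F] {n t : ℕ}
    (hq : 2 ≤ Fintype.card F)
    (C : Set (Fin n → F)) (h2 : 2 ≤ Nat.card C)
    (hmin : minDist C = 2 * t + 1)
    (hperfect : Nat.card C *
        (∑ i ∈ Finset.range (t + 1), n.choose i * (Fintype.card F - 1) ^ i) =
      Fintype.card F ^ n) :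
    (mdGraph C).Connected :=
  mdGraph_connected_of_perfect_general C hmin hperfect
end

section
/- Let q be a prime power, (S, ≤) a linear order, d_d ≤ d_f positive integers, and f : F_q^k → S a (d_f − 1)-locally binary function. Suppose there exists a systematic [n, k] linear code over F_q with minimum distance at least d_d. Then r_f(k : d_d, d_f) ≤ n − k + d_f − d_d. -/
/-- The function ball `B_f(u, ρ)` of `f` with radius `ρ` around `u`. -/
def funcBall {F S : Type*} [Fintype F] [DecidableEq F] {k : ℕ}
    (f : (Fin k → F) → S) (u : Fin k → F) (ρ : ℕ) : Set S :=
  f '' {u' : Fin k → F | hammingDist u u' ≤ ρ}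

/-- Hamming distance is monotone under coordinate embeddings. -/
lemma hammingDist_le_of_embed {F : Type*} [DecidableEq F] {a b : ℕ}
    (g : Fin a → Fin b) (hg : Function.Injective g)
    (x y : Fin a → F) (X Y : Fin b → F)
    (hx : ∀ i, X (g i) = x i) (hy : ∀ i, Y (g i) = y i) :
    hammingDist x y ≤ hammingDist X Y := by
  unfold hammingDist
  apply Finset.card_le_card_of_injOn g
  · intro i hi
    simp only [Finset.mem_coe, Finset.mem_filter, Finset.mem_univ, true_and] at hi ⊢
    rw [hx, hy]; exact hi
  · exact hg.injOn

/-- Key ball lemma: if `f u < f v` with `u, v` close, then every value in the ball around `v`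
is at most `f v`, while not every value in the ball around `u` is at most `f u`. -/
lemma ball_lemma {F S : Type*} [Fintype F] [DecidableEq F] [LinearOrder S] {k : ℕ}
    (f : (Fin k → F) → S) (ρ : ℕ)
    (hlb : ∀ u : Fin k → F, (funcBall f u ρ).ncard ≤ 2)
    (u v : Fin k → F) (hlt : f u < f v) (hd : hammingDist u v ≤ ρ) :
    (∀ s ∈ funcBall f v ρ, s ≤ f v) ∧ ¬(∀ s ∈ funcBall f u ρ, s ≤ f u) := by
  have hfu_v : f u ∈ funcBall f v ρ := ⟨u, by simpa [hammingDist_comm] using hd, rfl⟩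
  have hfv_v : f v ∈ funcBall f v ρ := ⟨v, by simp, rfl⟩
  have hfv_u : f v ∈ funcBall f u ρ := ⟨v, hd, rfl⟩
  constructor
  · -- ball around v is exactly {f u, f v}
    have hsub : ({f u, f v} : Set S) ⊆ funcBall f v ρ := by
      intro s hs; rcases hs with h | h <;> subst h <;> assumption
    have hfin : (funcBall f v ρ).Finite := by
      apply Set.Finite.image; exact Set.toFinite _
    have heq : ({f u, f v} : Set S) = funcBall f v ρ := by
      apply Set.eq_of_subset_of_ncard_le hsub _ hfin
      rw [Set.ncard_pair hlt.ne]
      exact hlb v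
    intro s hs
    rw [← heq] at hs
    rcases hs with h | h <;> subst h
    · exact hlt.le
    · exact le_rfl
  · intro hall
    exact absurd (hall _ hfv_u) (not_le.mpr hlt)

/-- For a `(d_f − 1)`-locally binary function `f : F_q^k → S` (`S` linearly
ordered) and a systematic `[n, k]` linear code over `F_q` of minimum distance at least `d_d`,
`r_f(k : d_d, d_f) ≤ n − k + d_f − d_d`. -/
theorem optRedundancy_le_of_locallyBinary
    {F S : Type*} [Field F] [Fintype F] [DecidableEq F] [LinearOrder S]
    {k n : ℕ} (hkn : k ≤ n) (dd df : ℕ) (hdd : 1 ≤ dd) (hddf : dd ≤ df)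
    (f : (Fin k → F) → S)
    (hlb : ∀ u : Fin k → F, (funcBall f u (df - 1)).ncard ≤ 2)
    (C : (Fin k → F) →ₗ[F] (Fin n → F)) (hCinj : Function.Injective C)
    (hCsys : ∀ (u : Fin k → F) (i : Fin k), C u (Fin.castLE hkn i) = u i)
    (hCdist : ∀ u v : Fin k → F, u ≠ v → dd ≤ hammingDist (C u) (C v)) :
    optRedundancy f dd df ≤ n - k + (df - dd) := by
  classical
  set m := df - dd with hm
  set r := n - k + m with hr
  have hkr : k + r = n + m := by omega
  have hnkr : n ≤ k + r := by omega
  -- the bit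
  set P : (Fin k → F) → Prop := fun u => ∀ s ∈ funcBall f u (df - 1), s ≤ f u with hP
  set bval : (Fin k → F) → F := fun u => if P u then 1 else 0 with hbval
  -- the encoding
  set c : (Fin k → F) → Fin (k + r) → F :=
    fun u j => if h : (j : ℕ) < n then C u ⟨j, h⟩ else bval u with hc
  -- basic embedding facts
  have hcC : ∀ u, ∀ i : Fin n, c u ⟨(i : ℕ), lt_of_lt_of_le i.2 hnkr⟩ = C u i := by
    intro u i
    simp only [hc]
    rw [dif_pos i.2]
  have hdistC : ∀ u v, hammingDist (C u) (C v) ≤ hammingDist (c u) (c v) := by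
    intro u v
    apply hammingDist_le_of_embed (fun i : Fin n => ⟨(i : ℕ), lt_of_lt_of_le i.2 hnkr⟩)
    · intro i j hij
      simp only [Fin.mk.injEq] at hij
      exact Fin.ext hij
    · exact hcC u
    · exact hcC v
  have hdistu : ∀ u v : Fin k → F, hammingDist u v ≤ hammingDist (C u) (C v) := by
    intro u v
    apply hammingDist_le_of_embed (Fin.castLE hkn)
    · exact Fin.castLE_injective hkn
    · exact hCsys u
    · exact hCsys v
  -- if f values differ and words are close, the bits differ
  have hbit : ∀ u v : Fin k → F, f u ≠ f v → hammingDist u v ≤ df - 1 →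
      bval u ≠ bval v := by
    intro u v hfuv hd
    rcases lt_or_gt_of_ne hfuv with h | h
    · obtain ⟨hv, hu⟩ := ball_lemma f (df - 1) hlb u v h hd
      simp only [hbval, hP, if_pos hv, if_neg hu]
      exact zero_ne_one
    · obtain ⟨hu2, hv2⟩ := ball_lemma f (df - 1) hlb v u h (by rwa [hammingDist_comm])
      simp only [hbval, hP, if_pos hu2, if_neg hv2]
      exact one_ne_zero
  apply Nat.sInf_le
  refine ⟨c, ?_, ?_, ?_⟩
  · -- systematic
    intro u i
    have hi : ((Fin.castAdd r i : Fin (k + r)) : ℕ) < n := lt_of_lt_of_le i.2 hkn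
    simp only [hc]
    rw [dif_pos hi]
    have := hCsys u i
    convert this using 2
    exact Fin.ext rfl
  · -- distance dd
    intro u v huv
    exact le_trans (hCdist u v huv) (hdistC u v)
  · -- distance df
    intro u v hfuv
    have huv : u ≠ v := fun h => hfuv (by rw [h])
    by_cases hb : bval u = bval v
    · -- bits equal: the code distance must already be ≥ df
      have hCd : df ≤ hammingDist (C u) (C v) := by
        by_contra h
        push_neg at h
        have hd : hammingDist u v ≤ df - 1 :=
          le_trans (hdistu u v) (by omega)
        exact hbit u v hfuv hd hb
      exact le_trans hCd (hdistC u v)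
    · -- bits differ: code part ≥ dd, tail contributes m
      have h1 : dd + m ≤ hammingDist (c u) (c v) := by
        unfold hammingDist
        set A : Finset (Fin (k + r)) :=
          (Finset.univ.filter fun i : Fin n => C u i ≠ C v i).image
            (fun i : Fin n => (⟨(i : ℕ), lt_of_lt_of_le i.2 hnkr⟩ : Fin (k + r))) with hA
        set B : Finset (Fin (k + r)) :=
          (Finset.univ : Finset (Fin m)).image
            (fun i : Fin m => (⟨n + (i : ℕ), by omega⟩ : Fin (k + r))) with hB
        have hAcard : hammingDist (C u) (C v) = A.card := by
          rw [hA, Finset.card_image_of_injective]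
          · rfl
          · intro i j hij
            simp only [Fin.mk.injEq] at hij
            exact Fin.ext hij
        have hBcard : B.card = m := by
          rw [hB, Finset.card_image_of_injective]
          · simp
          · intro i j hij
            have := congrArg Fin.val hij
            simp only at this
            exact Fin.ext (by omega)
        have hAsub : A ⊆ Finset.univ.filter fun j => c u j ≠ c v j := by
          intro j hj
          rw [hA, Finset.mem_image] at hj
          obtain ⟨i, hi, rfl⟩ := hj
          simp only [Finset.mem_filter, Finset.mem_univ, true_and] at hi ⊢
          rw [hcC, hcC]
          exact hi
        have hBsub : B ⊆ Finset.univ.filter fun j => c u j ≠ c v j := by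
          intro j hj
          rw [hB, Finset.mem_image] at hj
          obtain ⟨i, _, rfl⟩ := hj
          simp only [Finset.mem_filter, Finset.mem_univ, true_and]
          have hge : ¬ ((n + (i : ℕ)) < n) := by omega
          simp only [hc]
          rw [dif_neg hge, dif_neg hge]
          exact hb
        have hdisj : Disjoint A B := by
          rw [Finset.disjoint_left]
          intro j hjA hjB
          rw [hA, Finset.mem_image] at hjA
          rw [hB, Finset.mem_image] at hjB
          obtain ⟨i1, _, h1⟩ := hjA
          obtain ⟨i2, _, h2⟩ := hjB
          have hv1 := congrArg Fin.val h1
          have hv2 := congrArg Fin.val h2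
          simp only at hv1 hv2
          have : (i1 : ℕ) < n := i1.2
          omega
        calc dd + m ≤ A.card + B.card := by
              have := hCdist u v huv
              omega
          _ = (A ∪ B).card := (Finset.card_union_of_disjoint hdisj).symm
          _ ≤ _ := Finset.card_le_card (Finset.union_subset hAsub hBsub)
      omega
end

section
/- Let q ≥ 2 and M ≥ 1 be integers, D an M×M matrix with natural-number entries, and a = M mod q. Then 2q · Σ_{1 ≤ i < j ≤ M} D_{i,j} ≤ N(D) · (M²(q−1) − a(q−a)), where N(D) is the least length r for which there exist vectors p_1, …, p_M in F_q^r with d(p_i, p_j) ≥ D_{i,j} for all i, j. Equivalently, N(D) ≥ 2q (Σ_{i<j} D_{i,j}) / (M²(q−1) − a(q−a)). -/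
open Finset

section Counting

variable {ι α : Type*} [Fintype ι] [Fintype α]

/-- Equality holds when `a = M % q` of the `n s` equal `M / q + 1` and the others `M / q`. -/
theorem sq_sum_add_mod_mul_le_card_mul_sum_sq (n : α → ℕ) :
    ((∑ s, n s : ℕ) : ℤ) ^ 2 +
        ((∑ s, n s) % Fintype.card α : ℕ) * (Fintype.card α - ((∑ s, n s) % Fintype.card α : ℕ))
      ≤ Fintype.card α * ∑ s, (n s : ℤ) ^ 2 := by
  set M := ∑ s, n s
  set q := Fintype.card α
  set m := M / q
  set a := M % q
  -- `(n - m) (n - m - 1) ≥ 0` for integers `n`, `m`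
  have tangent (s : α) : (2 * m + 1 : ℤ) * n s ≤ (n s : ℤ) ^ 2 + m * (m + 1) := by
    rcases le_or_gt (n s : ℤ) m with h | h <;> nlinarith
  have summed : (2 * m + 1 : ℤ) * M ≤ ∑ s, (n s : ℤ) ^ 2 + q * (m * (m + 1)) := by
    have := sum_le_sum fun s (_ : s ∈ univ) => tangent s
    simpa [M, q, ← mul_sum, sum_add_distrib] using this
  have hM : (M : ℤ) = q * m + a := by exact_mod_cast (Nat.div_add_mod M q).symm
  have := mul_le_mul_of_nonneg_left summed (Nat.cast_nonneg (α := ℤ) q)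
  rw [hM] at this ⊢
  nlinarith

theorem card_filter_apply_eq_apply_eq_sum_sq [DecidableEq α] (f : ι → α) :
    #{x : ι × ι | f x.1 = f x.2} = ∑ s, #{i | f i = s} ^ 2 := by
  rw [card_eq_sum_card_fiberwise (f := fun x : ι × ι => f x.1) (t := univ) fun _ _ => mem_univ _]
  refine sum_congr rfl fun s _ => ?_
  rw [sq, ← card_product]
  congr 1
  ext ⟨i, j⟩
  simp only [mem_filter, mem_univ, true_and, mem_product]
  constructor
  · rintro ⟨hij, rfl⟩; exact ⟨rfl, hij.symm⟩
  · rintro ⟨hi, hj⟩; exact ⟨hi.trans hj.symm, hi⟩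

theorem card_mul_card_filter_ne_add_le [DecidableEq α] (f : ι → α) :
    Fintype.card α * #{x : ι × ι | f x.1 ≠ f x.2} +
        Fintype.card ι % Fintype.card α * (Fintype.card α - Fintype.card ι % Fintype.card α)
      ≤ Fintype.card ι ^ 2 * (Fintype.card α - 1) := by
  set q := Fintype.card α
  set M := Fintype.card ι
  rcases (Nat.zero_le q).eq_or_lt with hq | hq
  · simp [← hq]
  set n : α → ℕ := fun s => #{i | f i = s}
  have hn : ∑ s, n s = M := (card_eq_sum_card_fiberwise fun i _ => mem_univ (f i)).symm
  have hpairs : #{x : ι × ι | f x.1 ≠ f x.2} + ∑ s, n s ^ 2 = M ^ 2 := by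
    rw [← card_filter_apply_eq_apply_eq_sum_sq, add_comm, card_filter_add_card_filter_not]
    simp [M, sq]
  have hsq := sq_sum_add_mod_mul_le_card_mul_sum_sq n
  rw [hn] at hsq
  set a := M % q
  have haq : a ≤ q := (Nat.mod_lt M hq).le
  zify [haq, hq] at hpairs ⊢
  nlinarith

theorem sum_sum_hammingDist_eq_sum_card_filter_ne {κ β : Type*} [Fintype κ] [DecidableEq β]
    (p : ι → κ → β) :
    ∑ i, ∑ j, hammingDist (p i) (p j) = ∑ k, #{x : ι × ι | p x.1 k ≠ p x.2 k} := by
  simp only [hammingDist, card_filter]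
  rw [← Fintype.sum_prod_type', sum_comm]

theorem two_mul_sum_sum_ite_lt_le_sum_sum [LinearOrder ι] (D g : ι → ι → ℕ)
    (hD : ∀ i j, D i j ≤ g i j) (hg : ∀ i j, g i j = g j i) :
    2 * ∑ i, ∑ j, (if i < j then D i j else 0) ≤ ∑ i, ∑ j, g i j := by
  have hpair (i j : ι) : ((if i < j then D i j else 0) + if j < i then D j i else 0) ≤ g i j := by
    rcases lt_trichotomy i j with h | rfl | h
    · simpa [h, h.not_gt] using hD i j
    · simp
    · simpa [h, h.not_gt, hg i j] using hD j i
  calc 2 * ∑ i, ∑ j, (if i < j then D i j else 0)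
      = ∑ i, ∑ j, ((if i < j then D i j else 0) + if j < i then D j i else 0) := by
        simp only [two_mul, sum_add_distrib]
        exact congrArg _ sum_comm
    _ ≤ ∑ i, ∑ j, g i j := sum_le_sum fun i _ => sum_le_sum fun j _ => hpair i j

end Counting

theorem plotkin_bound_Dcode_general
    {q M : ℕ} (D : Fin M → Fin M → ℕ) (a : ℕ) (ha : a = M % q)
    (hex : ∃ r : ℕ, ∃ p : Fin M → Fin r → Fin q,
      ∀ i j, D i j ≤ hammingDist (p i) (p j)) :
    2 * q * (∑ i : Fin M, ∑ j : Fin M, if i < j then D i j else 0) ≤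
      Nmat (Fin q) D * (M ^ 2 * (q - 1) - a * (q - a)) := by
  obtain ⟨p, hp⟩ : ∃ p : Fin M → Fin (Nmat (Fin q) D) → Fin q,
      ∀ i j, D i j ≤ hammingDist (p i) (p j) := Nat.sInf_mem hex
  have hcol (k : Fin (Nmat (Fin q) D)) :
      q * #{x : Fin M × Fin M | p x.1 k ≠ p x.2 k} ≤ M ^ 2 * (q - 1) - a * (q - a) := by
    have := card_mul_card_filter_ne_add_le fun i => p i k
    rw [Fintype.card_fin, Fintype.card_fin, ← ha] at this
    exact Nat.le_sub_of_add_le this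
  calc 2 * q * (∑ i : Fin M, ∑ j : Fin M, if i < j then D i j else 0)
      ≤ q * ∑ i, ∑ j, hammingDist (p i) (p j) := by
        rw [mul_comm 2, mul_assoc]
        exact Nat.mul_le_mul_left q
          (two_mul_sum_sum_ite_lt_le_sum_sum D _ hp fun i j => hammingDist_comm _ _)
    _ = ∑ k, q * #{x : Fin M × Fin M | p x.1 k ≠ p x.2 k} := by
        rw [sum_sum_hammingDist_eq_sum_card_filter_ne, mul_sum]
    _ ≤ Nmat (Fin q) D * (M ^ 2 * (q - 1) - a * (q - a)) := by
        simpa using sum_le_sum fun k (_ : k ∈ univ) => hcol k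

/-- **generalized Plotkin bound for irregular-distance codes.**
For a `q`-ary alphabet (`q ≥ 2`), `M ≥ 1`, a matrix `D` admitting a `D`-code, and
`a = M mod q`, we have `2q · Σ_{i<j} D_{i,j} ≤ N(D) · (M²(q−1) − a(q−a))`. -/
theorem plotkin_bound_Dcode
    {q M : ℕ} (hq : 2 ≤ q) (hM : 1 ≤ M)
    (D : Fin M → Fin M → ℕ) (a : ℕ) (ha : a = M % q)
    (hex : ∃ r : ℕ, ∃ p : Fin M → Fin r → Fin q,
      ∀ i j, D i j ≤ hammingDist (p i) (p j)) :
    2 * q * (∑ i : Fin M, ∑ j : Fin M, if i < j then D i j else 0) ≤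
      Nmat (Fin q) D * (M ^ 2 * (q - 1) - a * (q - a)) :=
  plotkin_bound_Dcode_general D a ha hex
end

section
/- Let q be a prime power, f : F_q^k → S a function, d_d < d_f positive integers, and L = max_{α ∈ Im(f)} |f^{-1}(α)|. Then every (f : d_d, d_f)-FCC with redundancy r satisfies q^{k−1}(q−1)(k + r) ≥ (L−1)·d_d + (q^k − L)·d_f. In particular, r_f(k : d_d, d_f) ≥ ((L−1)d_d + (q^k − L)d_f) / (q^{k−1}(q−1)) − k. -/
/-!
Plotkin's averaging argument. Let `D` be the sum of `d(c u, c v)` over all ordered pairs of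
messages. A codeword is at distance `≥ d_d` from the `m - 1 ≤ L - 1` other codewords of its
`f`-fiber and `≥ d_f` from the `q^k - m ≥ q^k - L` codewords outside it; as `d_d ≤ d_f` this gives
`D ≥ q^k ((L - 1) d_d + (q^k - L) d_f)`. Coordinatewise, the ordered pairs that disagree in a
fixed position number `q^{2k} - ∑_a n_a²`, where `n_a` counts the codewords with symbol `a` there,
and Cauchy–Schwarz gives `∑_a n_a² ≥ q^{2k} / q`; summing over the `k + r` positions,
`q D ≤ (k + r)(q - 1) q^{2k}`.
-/

open Finset

section Fibers

variable {V β : Type*} [Fintype V] [Fintype β] [DecidableEq β] (g : V → β)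

theorem card_sq_le_card_mul_sum_card_fiber_sq :
    Fintype.card V ^ 2 ≤ Fintype.card β * ∑ b, #{u | g u = b} ^ 2 := by
  have h := sq_sum_le_card_mul_sum_sq (s := (univ : Finset β)) (f := fun b => #{u | g u = b})
  rwa [← card_eq_sum_card_fiberwise (fun _ _ => mem_univ _), card_univ, card_univ] at h

theorem sum_card_fiber_sq_eq_sum_card_fiber :
    ∑ b, #{u | g u = b} ^ 2 = ∑ u, #{v | g v = g u} := by
  rw [← sum_fiberwise univ g fun u => #{v | g v = g u}]
  refine sum_congr rfl fun b _ => ?_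
  rw [sum_congr rfl fun u hu => by rw [(mem_filter.1 hu).2], sum_const, smul_eq_mul, sq]

theorem sum_card_ne_add_sum_card_fiber_sq :
    ∑ u, #{v | g u ≠ g v} + ∑ b, #{u | g u = b} ^ 2 = Fintype.card V ^ 2 := by
  rw [sum_card_fiber_sq_eq_sum_card_fiber, ← sum_add_distrib]
  have hsplit (u : V) : #{v | g u ≠ g v} + #{v | g v = g u} = Fintype.card V := by
    rw [add_comm, filter_congr fun v _ => ne_comm, card_filter_add_card_filter_not, card_univ]
  simp [hsplit, sq]

theorem card_mul_sum_card_ne_le :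
    Fintype.card β * ∑ u, #{v | g u ≠ g v} ≤ (Fintype.card β - 1) * Fintype.card V ^ 2 := by
  have hsplit := congrArg (Fintype.card β * ·) (sum_card_ne_add_sum_card_fiber_sq g)
  have hcs := card_sq_le_card_mul_sum_card_fiber_sq g
  simp only [mul_add] at hsplit
  rw [Nat.sub_one_mul]
  omega

end Fibers

theorem sum_sum_hammingDist_eq_sum_sum_card_ne {V ι β : Type*} [Fintype V] [Fintype ι]
    [DecidableEq β] (c : V → ι → β) :
    ∑ u, ∑ v, hammingDist (c u) (c v) = ∑ i, ∑ u, #{v | c u i ≠ c v i} := by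
  simp only [hammingDist, card_filter]
  exact (sum_congr rfl fun u _ => sum_comm).trans sum_comm

theorem card_mul_sum_sum_hammingDist_le {V ι β : Type*} [Fintype V] [Fintype ι] [Fintype β]
    [DecidableEq β] (c : V → ι → β) :
    Fintype.card β * ∑ u, ∑ v, hammingDist (c u) (c v) ≤
      Fintype.card ι * ((Fintype.card β - 1) * Fintype.card V ^ 2) := by
  rw [sum_sum_hammingDist_eq_sum_sum_card_ne, mul_sum]
  calc _ ≤ ∑ _i : ι, (Fintype.card β - 1) * Fintype.card V ^ 2 :=
        sum_le_sum fun i _ => card_mul_sum_card_ne_le _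
    _ = _ := by rw [sum_const, card_univ, smul_eq_mul]

theorem sub_one_mul_add_sub_mul_le_of_le {m L N a b : ℕ} (hm : 1 ≤ m) (hmL : m ≤ L) (hLN : L ≤ N)
    (hab : a ≤ b) : (L - 1) * a + (N - L) * b ≤ (m - 1) * a + (N - m) * b := by
  obtain ⟨x, rfl⟩ := Nat.exists_eq_add_of_le hmL
  obtain ⟨y, rfl⟩ := Nat.exists_eq_add_of_le hLN
  rw [show m + x - 1 = m - 1 + x by omega, show m + x + y - (m + x) = y by omega,
    show m + x + y - m = x + y by omega]
  nlinarith

section FunctionCorrecting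

variable {V S ι β : Type*} [Fintype V] [DecidableEq V] [DecidableEq S] [Fintype ι] [DecidableEq β]
  (f : V → S) (c : V → ι → β) {dd df : ℕ}

theorem card_fiber_mul_add_le_sum_hammingDist
    (hd : ∀ u v, u ≠ v → dd ≤ hammingDist (c u) (c v))
    (hf : ∀ u v, f u ≠ f v → df ≤ hammingDist (c u) (c v)) (u : V) :
    (#{v | f v = f u} - 1) * dd + (Fintype.card V - #{v | f v = f u}) * df ≤
      ∑ v, hammingDist (c u) (c v) := by
  rw [← sum_filter_add_sum_filter_not univ (fun v => f v = f u)]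
  gcongr ?_ + ?_
  · have h := card_nsmul_le_sum (({v | f v = f u} : Finset V).erase u)
      (fun v => hammingDist (c u) (c v)) dd fun v hv => hd u v (ne_of_mem_erase hv).symm
    rwa [card_erase_of_mem (by simp), smul_eq_mul,
      sum_erase (f := fun v => hammingDist (c u) (c v)) _ (hammingDist_self (c u))] at h
  · have h := card_nsmul_le_sum {v | ¬f v = f u} (fun v => hammingDist (c u) (c v)) df
      fun v hv => hf u v (Ne.symm (mem_filter.1 hv).2)
    have hcard := card_filter_add_card_filter_not (s := univ) fun v => f v = f u
    rw [card_univ] at hcard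
    rwa [smul_eq_mul, Nat.eq_sub_of_add_eq' hcard] at h

theorem card_mul_le_sum_sum_hammingDist (hddf : dd ≤ df)
    (hd : ∀ u v, u ≠ v → dd ≤ hammingDist (c u) (c v))
    (hf : ∀ u v, f u ≠ f v → df ≤ hammingDist (c u) (c v)) {L : ℕ}
    (hfiber : ∀ u, #{v | f v = f u} ≤ L) (hLN : L ≤ Fintype.card V) :
    Fintype.card V * ((L - 1) * dd + (Fintype.card V - L) * df) ≤
      ∑ u, ∑ v, hammingDist (c u) (c v) := by
  calc _ = ∑ _u : V, ((L - 1) * dd + (Fintype.card V - L) * df) := by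
        rw [sum_const, card_univ, smul_eq_mul]
    _ ≤ _ := sum_le_sum fun u _ =>
      (sub_one_mul_add_sub_mul_le_of_le (one_le_card.2 ⟨u, by simp⟩) (hfiber u) hLN hddf).trans
        (card_fiber_mul_add_le_sum_hammingDist f c hd hf u)

theorem plotkin_bound_of_card_fiber_le [Fintype β] (hddf : dd ≤ df)
    (hd : ∀ u v, u ≠ v → dd ≤ hammingDist (c u) (c v))
    (hf : ∀ u v, f u ≠ f v → df ≤ hammingDist (c u) (c v)) {L : ℕ}
    (hfiber : ∀ u, #{v | f v = f u} ≤ L) (hLN : L ≤ Fintype.card V) :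
    Fintype.card β * ((L - 1) * dd + (Fintype.card V - L) * df) ≤
      Fintype.card ι * (Fintype.card β - 1) * Fintype.card V := by
  rcases (Fintype.card V).eq_zero_or_pos with hV | hV
  · simp [show L = 0 by omega, hV]
  refine Nat.le_of_mul_le_mul_left ?_ hV
  calc Fintype.card V * (Fintype.card β * ((L - 1) * dd + (Fintype.card V - L) * df))
      = Fintype.card β * (Fintype.card V * ((L - 1) * dd + (Fintype.card V - L) * df)) := by
        ring
    _ ≤ Fintype.card β * ∑ u, ∑ v, hammingDist (c u) (c v) :=
        Nat.mul_le_mul_left _ (card_mul_le_sum_sum_hammingDist f c hddf hd hf hfiber hLN)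
    _ ≤ Fintype.card ι * ((Fintype.card β - 1) * Fintype.card V ^ 2) :=
        card_mul_sum_sum_hammingDist_le c
    _ = _ := by ring

end FunctionCorrecting

theorem plotkin_bound_FCC_general
    {F S : Type*} [Fintype F] [DecidableEq F] [DecidableEq S]
    {k : ℕ} (f : (Fin k → F) → S) (dd df : ℕ) (hddf : dd < df)
    (L : ℕ)
    (hL : L = Finset.univ.sup fun u : Fin k → F =>
      (Finset.univ.filter fun v : Fin k → F => f v = f u).card)
    {r : ℕ} (c : (Fin k → F) → (Fin (k + r) → F)) (hc : IsFCC f dd df c) :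
    (L - 1) * dd + (Fintype.card F ^ k - L) * df ≤
      Fintype.card F ^ (k - 1) * (Fintype.card F - 1) * (k + r) := by
  obtain ⟨-, hd, hf⟩ := hc
  have hfiber (u : Fin k → F) : #{v | f v = f u} ≤ L :=
    hL ▸ le_sup (f := fun u => #{v | f v = f u}) (mem_univ u)
  have hLN : L ≤ Fintype.card (Fin k → F) := hL ▸ Finset.sup_le fun u _ => card_le_univ _
  have hbound := plotkin_bound_of_card_fiber_le f c hddf.le hd hf hfiber hLN
  simp only [Fintype.card_fun, Fintype.card_fin] at hLN hbound
  set q := Fintype.card F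
  rcases k with _ | n
  -- `k - 1` truncates here, but the left side vanishes: the single message forces `L = 1`.
  · have hL1 : 1 ≤ L := (one_le_card.2 ⟨default, by simp⟩).trans (hfiber default)
    rw [pow_zero] at hLN
    simp [show L = 1 by omega]
  rcases q.eq_zero_or_pos with hq | hq
  · simp [show L = 0 by simpa [hq] using hLN, hq]
  refine Nat.le_of_mul_le_mul_left ?_ hq
  calc _ ≤ (n + 1 + r) * (q - 1) * q ^ (n + 1) := hbound
    _ = q * (q ^ (n + 1 - 1) * (q - 1) * (n + 1 + r)) := by simp only [Nat.add_sub_cancel]; ring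

/-- **Plotkin-type bound for FCCs.** With
`L = max_{α ∈ Im(f)} |f⁻¹(α)|` and `d_d < d_f`, every `(f : d_d, d_f)`-FCC with redundancy `r`
satisfies `q^{k−1}(q−1)(k+r) ≥ (L−1)d_d + (q^k − L)d_f`. -/
theorem plotkin_bound_FCC
    {F S : Type*} [Field F] [Fintype F] [DecidableEq F] [DecidableEq S]
    {k : ℕ} (f : (Fin k → F) → S) (dd df : ℕ) (hdd : 1 ≤ dd) (hddf : dd < df)
    (L : ℕ)
    (hL : L = Finset.univ.sup fun u : Fin k → F =>
      (Finset.univ.filter fun v : Fin k → F => f v = f u).card)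
    {r : ℕ} (c : (Fin k → F) → (Fin (k + r) → F)) (hc : IsFCC f dd df c) :
    (L - 1) * dd + (Fintype.card F ^ k - L) * df ≤
      Fintype.card F ^ (k - 1) * (Fintype.card F - 1) * (k + r) :=
  plotkin_bound_FCC_general f dd df hddf L hL c hc
end

section
/- Let q be a prime power and f : F_q^k → S a function with E = |Im(f)| and ℓ = min_{α ∈ Im(f)} |f^{-1}(α)|. Suppose there exists an (f, t)-FCC of length n, i.e., a systematic encoding 𝔠 : F_q^k → F_q^n with d(𝔠(u_1), 𝔠(u_2)) ≥ 2t+1 whenever f(u_1) ≠ f(u_2). Then E · m ≤ q^n, where m is the minimum of |B(v_1, t) ∪ ⋯ ∪ B(v_ℓ, t)| over all choices of ℓ pairwise distinct vectors v_1, …, v_ℓ ∈ F_q^n. -/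
/-!
For each value `α` of `f`, the `t`-balls around the codewords of the fibre `f⁻¹(α)` cover at
least `m` words, since the fibre has at least `ℓ` elements and the encoding is injective. Codewords
of different fibres are at distance at least `2t + 1`, so these covers are pairwise disjoint, and
the `E` of them fit into the `q^n` words of `F_q^n`.
-/

open Function Set

theorem injective_of_systematic {ι κ β : Type*} (e : ι → κ) (enc : (ι → β) → κ → β)
    (hsys : ∀ u i, enc u (e i) = u i) : Injective enc := fun u v h ↦
  funext fun i ↦ by rw [← hsys u i, h, hsys v i]

theorem sInf_card_iUnion_le_card_biUnion {X Y : Type*} [Finite X] [Finite Y] (B : X → Set Y)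
    {l : ℕ} {C : Set X} (hC : l ≤ C.ncard) :
    sInf {c | ∃ v : Fin l → X, Injective v ∧ Nat.card (⋃ j, B (v j)) = c} ≤
      Nat.card (⋃ x ∈ C, B x) := by
  have : Fintype C := Fintype.ofFinite C
  obtain ⟨v⟩ : Nonempty (Fin l ↪ C) :=
    Function.Embedding.nonempty_of_card_le (by rwa [Fintype.card_fin, ← Nat.card_eq_fintype_card])
  have hv : Nat.card (⋃ j, B (v j)) ∈
      {c | ∃ v : Fin l → X, Injective v ∧ Nat.card (⋃ j, B (v j)) = c} :=
    ⟨fun j ↦ v j, Subtype.val_injective.comp v.injective, rfl⟩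
  refine (Nat.sInf_le hv).trans ?_
  exact Nat.card_mono (toFinite _) (iUnion_subset fun j ↦ subset_biUnion_of_mem (v j).2)

theorem disjoint_biUnion_hammingBall {ι β : Type*} [Fintype ι] [DecidableEq β] {t : ℕ}
    {C D : Set (ι → β)} (h : ∀ c ∈ C, ∀ d ∈ D, 2 * t + 1 ≤ hammingDist c d) :
    Disjoint (⋃ c ∈ C, {x | hammingDist x c ≤ t}) (⋃ d ∈ D, {x | hammingDist x d ≤ t}) := by
  refine disjoint_left.2 fun x hxC hxD ↦ ?_
  obtain ⟨c, hc, hxc : hammingDist x c ≤ t⟩ := mem_iUnion₂.1 hxC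
  obtain ⟨d, hd, hxd : hammingDist x d ≤ t⟩ := mem_iUnion₂.1 hxD
  have htri := hammingDist_triangle c x d
  rw [hammingDist_comm c x] at htri
  have hcd := h c hc d hd
  omega

theorem ncard_mul_le_card_of_pairwiseDisjoint {ι Y : Type*} [Finite Y] {A : Set ι}
    (hA : A.Finite) {s : ι → Set Y} (hs : A.PairwiseDisjoint s) {m : ℕ}
    (hm : ∀ i ∈ A, m ≤ (s i).ncard) : A.ncard * m ≤ Nat.card Y := by
  obtain ⟨A, rfl⟩ := hA.exists_finset_coe
  calc (A : Set ι).ncard * m = A.card • m := by rw [ncard_coe_finset, smul_eq_mul]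
    _ ≤ ∑ i ∈ A, (s i).ncard := A.card_nsmul_le_sum _ m hm
    _ = (⋃ i ∈ (A : Set ι), s i).ncard := by
      rw [A.finite_toSet.ncard_biUnion (fun _ _ ↦ toFinite _) hs, finsum_mem_coe_finset]
    _ ≤ Nat.card Y := ncard_le_card _

theorem hamming_bound_FCC_general
    {F S : Type*} [Fintype F] [DecidableEq F]
    {k n : ℕ} (hkn : k ≤ n) (f : (Fin k → F) → S) (t : ℕ)
    (E l m : ℕ)
    (hE : E = Nat.card (Set.range f))
    (hl1 : ∀ u : Fin k → F, l ≤ Nat.card {v : Fin k → F | f v = f u})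
    (hm : m = sInf {c : ℕ | ∃ v : Fin l → Fin n → F, Function.Injective v ∧
      Nat.card (⋃ j, {x : Fin n → F | hammingDist x (v j) ≤ t}) = c})
    (enc : (Fin k → F) → (Fin n → F))
    (hsys : ∀ (u : Fin k → F) (i : Fin k), enc u (Fin.castLE hkn i) = u i)
    (hfcc : ∀ u v : Fin k → F, f u ≠ f v → 2 * t + 1 ≤ hammingDist (enc u) (enc v)) :
    E * m ≤ Fintype.card F ^ n := by
  have hinj : Injective enc := injective_of_systematic (Fin.castLE hkn) enc hsys
  let cover (α : S) : Set (Fin n → F) :=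
    ⋃ c ∈ enc '' (f ⁻¹' {α}), {x | hammingDist x c ≤ t}
  have hcover : ∀ α ∈ range f, m ≤ (cover α).ncard := by
    rintro _ ⟨u, rfl⟩
    rw [hm, ← Nat.card_coe_set_eq]
    refine sInf_card_iUnion_le_card_biUnion (fun c ↦ {x | hammingDist x c ≤ t}) ?_
    rw [ncard_image_of_injective _ hinj, ← Nat.card_coe_set_eq]
    exact hl1 u
  have hdisj : (range f).PairwiseDisjoint cover := fun α _ β _ hαβ ↦
    disjoint_biUnion_hammingBall <| by
      rintro _ ⟨u, rfl, rfl⟩ _ ⟨v, hv, rfl⟩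
      exact hfcc u v fun huv ↦ hαβ (huv.trans hv)
  calc E * m = (range f).ncard * m := by rw [hE, Nat.card_coe_set_eq]
    _ ≤ Nat.card (Fin n → F) := ncard_mul_le_card_of_pairwiseDisjoint (finite_range f) hdisj hcover
    _ = Fintype.card F ^ n := by simp

/-- **generalized Hamming bound for `(f, t)`-FCCs.** If an `(f, t)`-FCC of
length `n` exists, `E = |Im(f)|`, `ℓ = min_{α ∈ Im(f)} |f⁻¹(α)|`, and `m` is the minimum size
of a union of `ℓ` Hamming balls of radius `t` around distinct centers in `F_q^n`, then
`E · m ≤ q^n`. -/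
theorem hamming_bound_FCC
    {F S : Type*} [Field F] [Fintype F] [DecidableEq F]
    {k n : ℕ} (hkn : k ≤ n) (f : (Fin k → F) → S) (t : ℕ)
    (E l m : ℕ)
    (hE : E = Nat.card (Set.range f))
    (hl1 : ∀ u : Fin k → F, l ≤ Nat.card {v : Fin k → F | f v = f u})
    (hl2 : ∃ u : Fin k → F, Nat.card {v : Fin k → F | f v = f u} = l)
    (hm : m = sInf {c : ℕ | ∃ v : Fin l → Fin n → F, Function.Injective v ∧
      Nat.card (⋃ j, {x : Fin n → F | hammingDist x (v j) ≤ t}) = c})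
    (enc : (Fin k → F) → (Fin n → F))
    (hsys : ∀ (u : Fin k → F) (i : Fin k), enc u (Fin.castLE hkn i) = u i)
    (hfcc : ∀ u v : Fin k → F, f u ≠ f v → 2 * t + 1 ≤ hammingDist (enc u) (enc v)) :
    E * m ≤ Fintype.card F ^ n :=
  hamming_bound_FCC_general hkn f t E l m hE hl1 hm enc hsys hfcc
end

section
/- Let q be a prime power and f : F_q^k → S a function with E = |Im(f)| and ℓ = min_{α ∈ Im(f)} |f^{-1}(α)|, and let d_d ≤ d_f be positive integers with t_f = ⌊(d_f − 1)/2⌋. Suppose there exists an (f : d_d, d_f)-FCC of length n. Then E · m ≤ q^n, where m is the minimum of |B(v_1, t_f) ∪ ⋯ ∪ B(v_ℓ, t_f)| over all choices of ℓ pairwise distinct vectors v_1, …, v_ℓ ∈ F_q^n satisfying d(v_i, v_j) ≥ d_d for all i ≠ j. -/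
/-!
Balls of radius `t_f` around codewords whose messages have different `f`-values are disjoint,
since such codewords are more than `2 t_f` apart. Hence the sets `T_α`, the union of the balls
around the codewords of the fibre `f⁻¹(α)`, are pairwise disjoint for `α ∈ Im(f)`. Each fibre
has at least `ℓ` messages, whose codewords are distinct and pairwise at distance `≥ d_d`, so
`|T_α| ≥ m`; packing the `E` sets `T_α` into `F_q^n` gives `E · m ≤ q^n`.
-/

open Function

theorem Set.PairwiseDisjoint.natCard_mul_le {ι α : Type*} [Finite α] {s : Set ι} [Finite s]
    {T : ι → Set α} (hT : s.PairwiseDisjoint T) {m : ℕ} (hm : ∀ i ∈ s, m ≤ Nat.card (T i)) :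
    Nat.card s * m ≤ Nat.card α := by
  have := Fintype.ofFinite s
  have hinj : Injective fun x : Σ i : s, T i => (x.2 : α) := by
    rintro ⟨i, x, hx⟩ ⟨j, y, hy⟩ (rfl : x = y)
    obtain rfl : i = j := Subtype.ext <| by_contra fun hij =>
      Set.disjoint_left.1 (hT i.2 j.2 hij) hx hy
    rfl
  calc Nat.card s * m = ∑ _i : s, m := by simp [Nat.card_eq_fintype_card]
    _ ≤ ∑ i : s, Nat.card (T i) := Finset.sum_le_sum fun i _ => hm i i.2
    _ = Nat.card (Σ i : s, T i) := Nat.card_sigma.symm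
    _ ≤ Nat.card α := Nat.card_le_card_of_injective _ hinj

section Hamming

variable {ι : Type*} [Fintype ι] {β : ι → Type*} [∀ i, DecidableEq (β i)]

theorem disjoint_hammingBalls_of_lt {x y : ∀ i, β i} {t : ℕ} (h : 2 * t < hammingDist x y) :
    Disjoint {z | hammingDist z x ≤ t} {z | hammingDist z y ≤ t} :=
  Set.disjoint_left.2 fun z (hx : hammingDist z x ≤ t) (hy : hammingDist z y ≤ t) =>
    h.not_ge <| (hammingDist_triangle_left x y z).trans (by omega)

theorem pairwise_disjoint_fibre_hammingBalls {γ S : Type*} (f : γ → S) (enc : γ → ∀ i, β i)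
    {t : ℕ} (h : ∀ u v, f u ≠ f v → 2 * t < hammingDist (enc u) (enc v)) :
    Pairwise (Disjoint on fun α => ⋃ u ∈ {u | f u = α}, {x | hammingDist x (enc u) ≤ t}) := by
  intro α α' hne
  simp only [onFun, Set.disjoint_iUnion_left, Set.disjoint_iUnion_right]
  rintro u rfl v rfl
  exact disjoint_hammingBalls_of_lt (h _ _ hne)

def hammingBallUnionCards (l d t : ℕ) : Set ℕ :=
  {c | ∃ v : Fin l → ∀ i, β i, Injective v ∧ (∀ i j, i ≠ j → d ≤ hammingDist (v i) (v j)) ∧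
    Nat.card (⋃ j, {x | hammingDist x (v j) ≤ t}) = c}

theorem sInf_hammingBallUnionCards_le [∀ i, Finite (β i)] {γ : Type*} {l d t : ℕ} (hd : 1 ≤ d)
    (enc : γ → ∀ i, β i) {P : Set γ} [Finite P] (hl : l ≤ Nat.card P)
    (hsep : ∀ u ∈ P, ∀ v ∈ P, u ≠ v → d ≤ hammingDist (enc u) (enc v)) :
    sInf (hammingBallUnionCards (β := β) l d t) ≤
      Nat.card (⋃ u ∈ P, {x | hammingDist x (enc u) ≤ t}) := by
  have := Fintype.ofFinite P
  obtain ⟨g⟩ : Nonempty (Fin l ↪ P) :=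
    Function.Embedding.nonempty_of_card_le (by simpa [Nat.card_eq_fintype_card] using hl)
  have hsep' : ∀ i j, i ≠ j → d ≤ hammingDist (enc (g i)) (enc (g j)) := fun i j hij =>
    hsep _ (g i).2 _ (g j).2 fun h => hij (g.injective (Subtype.ext h))
  have hinj : Injective fun j => enc (g j) := fun i j h =>
    by_contra fun hij => hammingDist_pos.1 (Nat.lt_of_lt_of_le hd (hsep' i j hij)) h
  calc sInf (hammingBallUnionCards l d t)
      ≤ Nat.card (⋃ j, {x | hammingDist x (enc (g j)) ≤ t}) := Nat.sInf_le ⟨_, hinj, hsep', rfl⟩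
    _ ≤ _ := Nat.card_mono (Set.toFinite _) <| Set.iUnion_subset fun j =>
      Set.subset_biUnion_of_mem (u := fun u => {x | hammingDist x (enc u) ≤ t}) (g j).2

end Hamming

theorem hamming_bound_FCC_data_protection_general
    {F S : Type*} [Fintype F] [DecidableEq F]
    {k n : ℕ} (f : (Fin k → F) → S)
    (dd df : ℕ) (hdd : 1 ≤ dd) (hddf : dd ≤ df)
    (E l m tf : ℕ) (htf : tf = (df - 1) / 2)
    (hE : E = Nat.card (Set.range f))
    (hl1 : ∀ u : Fin k → F, l ≤ Nat.card {v : Fin k → F | f v = f u})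
    (hm : m = sInf {c : ℕ | ∃ v : Fin l → Fin n → F, Function.Injective v ∧
      (∀ i j, i ≠ j → dd ≤ hammingDist (v i) (v j)) ∧
      Nat.card (⋃ j, {x : Fin n → F | hammingDist x (v j) ≤ tf}) = c})
    (enc : (Fin k → F) → (Fin n → F))
    (hdist : ∀ u v : Fin k → F, u ≠ v → dd ≤ hammingDist (enc u) (enc v))
    (hfdist : ∀ u v : Fin k → F, f u ≠ f v → df ≤ hammingDist (enc u) (enc v)) :
    E * m ≤ Fintype.card F ^ n := by
  have h2tf : 2 * tf < df := by omega
  have hdisj := pairwise_disjoint_fibre_hammingBalls f enc fun u v huv =>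
    h2tf.trans_le (hfdist u v huv)
  have hcard : ∀ α ∈ Set.range f,
      m ≤ Nat.card (⋃ u ∈ {u | f u = α}, {x : Fin n → F | hammingDist x (enc u) ≤ tf}) := by
    rintro _ ⟨u, rfl⟩
    rw [hm]
    exact sInf_hammingBallUnionCards_le hdd enc (hl1 u) fun v _ w _ => hdist v w
  calc E * m ≤ Nat.card (Fin n → F) := hE ▸ Set.PairwiseDisjoint.natCard_mul_le (hdisj.set_pairwise _) hcard
    _ = Fintype.card F ^ n := by simp

/-- **generalized Hamming bound for `(f : d_d, d_f)`-FCCs.** If an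
`(f : d_d, d_f)`-FCC of length `n` exists, with `t_f = ⌊(d_f − 1)/2⌋`, `E = |Im(f)|`,
`ℓ = min_{α ∈ Im(f)} |f⁻¹(α)|`, and `m` the minimum size of a union of `ℓ` Hamming balls of
radius `t_f` around distinct centers pairwise at distance at least `d_d` in `F_q^n`, then
`E · m ≤ q^n`. -/
theorem hamming_bound_FCC_data_protection
    {F S : Type*} [Field F] [Fintype F] [DecidableEq F]
    {k n : ℕ} (hkn : k ≤ n) (f : (Fin k → F) → S)
    (dd df : ℕ) (hdd : 1 ≤ dd) (hddf : dd ≤ df)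
    (E l m tf : ℕ) (htf : tf = (df - 1) / 2)
    (hE : E = Nat.card (Set.range f))
    (hl1 : ∀ u : Fin k → F, l ≤ Nat.card {v : Fin k → F | f v = f u})
    (hl2 : ∃ u : Fin k → F, Nat.card {v : Fin k → F | f v = f u} = l)
    (hm : m = sInf {c : ℕ | ∃ v : Fin l → Fin n → F, Function.Injective v ∧
      (∀ i j, i ≠ j → dd ≤ hammingDist (v i) (v j)) ∧
      Nat.card (⋃ j, {x : Fin n → F | hammingDist x (v j) ≤ tf}) = c})
    (enc : (Fin k → F) → (Fin n → F))
    (hsys : ∀ (u : Fin k → F) (i : Fin k), enc u (Fin.castLE hkn i) = u i)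
    (hdist : ∀ u v : Fin k → F, u ≠ v → dd ≤ hammingDist (enc u) (enc v))
    (hfdist : ∀ u v : Fin k → F, f u ≠ f v → df ≤ hammingDist (enc u) (enc v)) :
    E * m ≤ Fintype.card F ^ n :=
  hamming_bound_FCC_data_protection_general f dd df hdd hddf E l m tf htf hE hl1 hm enc hdist hfdist
end

section
/- Let q ≥ 2 and n ≥ 1 be integers, and let u, v ∈ F_q^n be vectors with Hamming distance d(u, v) = 1. Then for every natural number t ≥ 1, |B(u, t) ∪ B(v, t)| = 2 · Σ_{i=0}^{t} binom(n, i)(q−1)^i − q · Σ_{i=0}^{t−1} binom(n−1, i)(q−1)^i. -/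
/-!
Inclusion–exclusion: each ball has `∑_{i ≤ t} C(n,i)(q-1)^i` points, counted by the set of
coordinates where a word disagrees with the centre. If `u` and `v` differ only at the coordinate
`i`, a word `x` disagrees with at least one of them at `i`, so it lies in both balls exactly when
it is at distance less than `t` from `u` on the remaining `n - 1` coordinates; `x i` is then free,
giving `q · ∑_{i < t} C(n-1,i)(q-1)^i` points in the intersection.
-/

open Finset

section HammingBall

theorem exists_forall_ne_eq_of_hammingDist_eq_one {ι α : Type*} [Fintype ι] [DecidableEq α]
    {u v : ι → α} (h : hammingDist u v = 1) : ∃ i, u i ≠ v i ∧ ∀ j ≠ i, u j = v j := by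
  obtain ⟨i, hi⟩ := card_eq_one.mp h
  have hmem : ∀ j, u j ≠ v j ↔ j = i := fun j => by simpa using Finset.ext_iff.mp hi j
  exact ⟨i, (hmem i).mpr rfl, fun j hj => not_not.mp fun h => hj ((hmem j).mp h)⟩

theorem hammingDist_eq_ite_add_hammingDist_subtype_ne {ι α : Type*} [Fintype ι] [DecidableEq ι]
    [DecidableEq α] (x y : ι → α) (i : ι) :
    hammingDist x y =
      (if x i = y i then 0 else 1) + hammingDist (fun j : {j // j ≠ i} => x j) (fun j => y j) := by
  simp only [hammingDist, card_filter]
  rw [Fintype.sum_eq_add_sum_subtype_ne _ i]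
  simp only [ite_not]

theorem card_filter_funSplitAt_snd {ι α : Type*} [Fintype ι] [DecidableEq ι] [Fintype α]
    (i : ι) (p : ({j // j ≠ i} → α) → Prop) [DecidablePred p] :
    #{x : ι → α | p (Equiv.funSplitAt i α x).2} = Fintype.card α * #{y | p y} := by
  rw [card_equiv (Equiv.funSplitAt i α) (t := univ ×ˢ ({y | p y} : Finset _)) (by simp),
    card_product, card_univ]

variable {ι α : Type*} [Fintype ι] [DecidableEq ι] [Fintype α] [DecidableEq α]

theorem card_filter_disagreement_eq (u : ι → α) (S : Finset ι) :
    #{x : ι → α | ({j | x j ≠ u j} : Finset ι) = S} = (Fintype.card α - 1) ^ #S := by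
  have hfilter : ({x : ι → α | ({j | x j ≠ u j} : Finset ι) = S} : Finset (ι → α)) =
      Fintype.piFinset fun j => if j ∈ S then {u j}ᶜ else {u j} := by
    ext x
    simp only [mem_filter, mem_univ, true_and, Fintype.mem_piFinset, Finset.ext_iff]
    refine forall_congr' fun j => ?_
    split_ifs <;> simp_all
  rw [hfilter, Fintype.card_piFinset]
  simp [apply_ite Finset.card, card_compl, Finset.prod_ite_mem]

theorem card_hammingSphere (u : ι → α) (i : ℕ) :
    #{x : ι → α | hammingDist x u = i} = (Fintype.card ι).choose i * (Fintype.card α - 1) ^ i := by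
  rw [card_eq_sum_card_fiberwise (f := fun x => ({j | x j ≠ u j} : Finset ι))
    (t := powersetCard i univ) (fun x hx => by simpa [hammingDist] using hx)]
  have hfiber : ∀ S ∈ powersetCard i (univ : Finset ι),
      #{x ∈ ({x : ι → α | hammingDist x u = i} : Finset _) | ({j | x j ≠ u j} : Finset ι) = S} =
        (Fintype.card α - 1) ^ i := by
    intro S hS
    rw [mem_powersetCard_univ] at hS
    rw [filter_filter, ← hS, ← card_filter_disagreement_eq u S]
    congr 1
    refine filter_congr fun x _ => and_iff_right_of_imp fun h => ?_
    rw [hammingDist, h]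
  rw [sum_congr rfl hfiber, sum_const, card_powersetCard, card_univ, smul_eq_mul]

theorem card_hammingDist_lt (u : ι → α) (t : ℕ) :
    #{x : ι → α | hammingDist x u < t} =
      ∑ i ∈ range t, (Fintype.card ι).choose i * (Fintype.card α - 1) ^ i := by
  rw [card_eq_sum_card_fiberwise (f := fun x => hammingDist x u) (t := range t)
    (fun x hx => by simpa using hx)]
  refine sum_congr rfl fun i hi => ?_
  rw [filter_filter, ← card_hammingSphere u i]
  congr 1
  exact filter_congr fun x _ => and_iff_right_of_imp fun h => h ▸ mem_range.mp hi

theorem card_hammingBall (u : ι → α) (t : ℕ) :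
    #{x : ι → α | hammingDist x u ≤ t} =
      ∑ i ∈ range (t + 1), (Fintype.card ι).choose i * (Fintype.card α - 1) ^ i := by
  simpa only [Nat.lt_succ_iff] using card_hammingDist_lt u (t + 1)

theorem card_hammingBall_inter_of_hammingDist_eq_one {u v : ι → α} (huv : hammingDist u v = 1)
    (t : ℕ) :
    #(({x | hammingDist x u ≤ t} : Finset (ι → α)) ∩ ({x | hammingDist x v ≤ t} : Finset _)) =
      Fintype.card α * ∑ k ∈ range t, (Fintype.card ι - 1).choose k * (Fintype.card α - 1) ^ k := by
  obtain ⟨i, hi, hagree⟩ := exists_forall_ne_eq_of_hammingDist_eq_one huv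
  have hrestrict : (fun j : {j // j ≠ i} => v j) = fun j : {j // j ≠ i} => u j :=
    funext fun j => (hagree j j.2).symm
  have hiff : ∀ x : ι → α, hammingDist x u ≤ t ∧ hammingDist x v ≤ t ↔
      hammingDist (Equiv.funSplitAt i α x).2 (fun j : {j // j ≠ i} => u j) < t := by
    intro x
    rw [hammingDist_eq_ite_add_hammingDist_subtype_ne x u i,
      hammingDist_eq_ite_add_hammingDist_subtype_ne x v i, hrestrict]
    have hdisagree : x i ≠ u i ∨ x i ≠ v i := by
      by_contra! h
      exact hi (h.1.symm.trans h.2)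
    simp only [Equiv.funSplitAt_apply]
    split_ifs <;> grind
  rw [← filter_and, filter_congr fun x _ => hiff x,
    card_filter_funSplitAt_snd i (fun y => hammingDist y _ < t), card_hammingDist_lt,
    Fintype.card_subtype_compl, Fintype.card_subtype_eq]

end HammingBall

theorem card_union_two_balls_dist_one_general
    {q n : ℕ} (t : ℕ)
    (u v : Fin n → Fin q) (huv : hammingDist u v = 1) :
    Nat.card ({x : Fin n → Fin q | hammingDist x u ≤ t} ∪
        {x : Fin n → Fin q | hammingDist x v ≤ t} : Set (Fin n → Fin q)) =
      2 * ∑ i ∈ Finset.range (t + 1), n.choose i * (q - 1) ^ i -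
        q * ∑ i ∈ Finset.range t, (n - 1).choose i * (q - 1) ^ i := by
  rw [Nat.card_eq_card_toFinset, Set.toFinset_union, Set.toFinset_ofPred, Set.toFinset_ofPred]
  have hincl_excl := card_union_add_card_inter
    ({x | hammingDist x u ≤ t} : Finset (Fin n → Fin q)) {x | hammingDist x v ≤ t}
  simp only [card_hammingBall, card_hammingBall_inter_of_hammingDist_eq_one huv,
    Fintype.card_fin] at hincl_excl
  omega

/-- For `q ≥ 2`, `n ≥ 1`, vectors `u, v ∈ F_q^n` at Hamming distance `1`,
and `t ≥ 1`, the union of the two Hamming balls of radius `t` around `u` and `v` has size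
`2 · Σ_{i=0}^{t} C(n,i)(q−1)^i − q · Σ_{i=0}^{t−1} C(n−1,i)(q−1)^i`. -/
theorem card_union_two_balls_dist_one
    {q n : ℕ} (hq : 2 ≤ q) (hn : 1 ≤ n) (t : ℕ) (ht : 1 ≤ t)
    (u v : Fin n → Fin q) (huv : hammingDist u v = 1) :
    Nat.card ({x : Fin n → Fin q | hammingDist x u ≤ t} ∪
        {x : Fin n → Fin q | hammingDist x v ≤ t} : Set (Fin n → Fin q)) =
      2 * ∑ i ∈ Finset.range (t + 1), n.choose i * (q - 1) ^ i -
        q * ∑ i ∈ Finset.range t, (n - 1).choose i * (q - 1) ^ i :=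
  card_union_two_balls_dist_one_general t u v huv
end
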